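/- arXiv:2404.07010 — 8 statements merged into one kernel-verified Lean document; each statement's English description precedes it below -/
import Mathlib

section
/- Let Q ⊂ ℝ^d be a polytope (the convex hull of a finite set) contained in the nonnegative orthant and not containing the origin, let f : ℝ^d → ℝ be continuous and convex on Q, and let μ : ℝ^d → ℝ be continuous, concave on Q, with μ(x) ≥ f(x) for all x ∈ Q. Then the (d+2)-dimensional Lebesgue measure of the set S := {(x,y,z) ∈ ℝ^d × ℝ × ℝ : 0 < z ≤ 1, x ∈ z•Q, z·f(x/z) ≤ y ≤ z·μ(x/z)} equals (1/(d+2))·∫_Q μ(x) dx − (1/(d+2))·∫_Q f(x) dx. -/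
/-!
Write `R ⊆ ℝ^d × ℝ` for the closed region between the graphs of `f` and `μ` over `Q`. For
`0 < z ≤ 1` the substitution `(x, y) = z • (q, t)` identifies the slice of the set at height `z`
with `z • R`, whose volume is `z ^ (d + 1) · vol R`. Integrating over `z ∈ (0, 1]` gives
`vol R / (d + 2)`, and `vol R = ∫_Q (μ - f)` by Fubini.
-/

open MeasureTheory Pointwise Set Module

section RegionBetween

variable {α : Type*}

theorem IsClosed.isClosed_region_between_cc [TopologicalSpace α] {f g : α → ℝ} {s : Set α}
    (hs : IsClosed s) (hf : ContinuousOn f s) (hg : ContinuousOn g s) :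
    IsClosed {p : α × ℝ | p.1 ∈ s ∧ p.2 ∈ Icc (f p.1) (g p.1)} := by
  have hs' : IsClosed (s ×ˢ (univ : Set ℝ)) := hs.prod isClosed_univ
  have hmaps : MapsTo Prod.fst (s ×ˢ (univ : Set ℝ)) s := fun p hp => hp.1
  have hf' := hf.comp continuous_fst.continuousOn hmaps
  have hg' := hg.comp continuous_fst.continuousOn hmaps
  convert (hs'.isClosed_le hf' continuous_snd.continuousOn).inter
    (hs'.isClosed_le continuous_snd.continuousOn hg') using 1
  ext p
  simp only [mem_ofPred_eq, mem_Icc, mem_inter_iff, mem_prod, mem_univ, and_true,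
    Function.comp_apply]
  tauto

theorem volume_region_between_cc_eq_integral [MeasurableSpace α] {ν : Measure α} [SFinite ν]
    {f g : α → ℝ} {s : Set α}
    (hreg : MeasurableSet {p : α × ℝ | p.1 ∈ s ∧ p.2 ∈ Icc (f p.1) (g p.1)})
    (hs : MeasurableSet s) (f_int : IntegrableOn f s ν) (g_int : IntegrableOn g s ν)
    (hfg : ∀ x ∈ s, f x ≤ g x) :
    ν.prod volume {p : α × ℝ | p.1 ∈ s ∧ p.2 ∈ Icc (f p.1) (g p.1)} =
      ENNReal.ofReal (∫ x in s, g x - f x ∂ν) := by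
  have hslice : ∀ x,
      volume (Prod.mk x ⁻¹' {p : α × ℝ | p.1 ∈ s ∧ p.2 ∈ Icc (f p.1) (g p.1)}) =
        s.indicator (fun x => ENNReal.ofReal (g x - f x)) x := by
    intro x
    by_cases hx : x ∈ s
    · have hIcc : Prod.mk x ⁻¹' {p : α × ℝ | p.1 ∈ s ∧ p.2 ∈ Icc (f p.1) (g p.1)} =
          Icc (f x) (g x) := by
        ext y
        simp [hx]
      rw [hIcc, Real.volume_Icc, indicator_of_mem hx]
    · simp [hx]
  rw [Measure.prod_apply hreg, funext hslice, lintegral_indicator hs,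
    ofReal_integral_eq_lintegral_ofReal (f := fun x => g x - f x) (g_int.sub f_int)]
  exact (ae_restrict_iff' hs).2 (.of_forall fun x hx => sub_nonneg.2 (hfg x hx))

end RegionBetween

theorem lintegral_Ioc_zero_one_ofReal_pow (n : ℕ) :
    ∫⁻ t in Ioc (0 : ℝ) 1, ENNReal.ofReal (t ^ n) = ENNReal.ofReal (1 / (n + 1)) := by
  rw [← ofReal_integral_eq_lintegral_ofReal (continuous_pow n).integrableOn_Ioc
    ((ae_restrict_iff' measurableSet_Ioc).2 (.of_forall fun t ht => pow_nonneg ht.1.le n)),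
    ← intervalIntegral.integral_of_le zero_le_one, integral_pow]
  simp

section TruncatedCone

variable {E : Type*} [NormedAddCommGroup E] [NormedSpace ℝ E]

/-- The cone `⋃ t ∈ (0, 1], t • K × {t}` over `K`, with apex at the origin. -/
def truncatedCone (K : Set E) : Set (E × ℝ) :=
  {p | p.2 ∈ Ioc 0 1 ∧ p.2⁻¹ • p.1 ∈ K}

theorem measurableSet_truncatedCone [MeasurableSpace E] [BorelSpace E] {K : Set E}
    (hK : MeasurableSet K) : MeasurableSet (truncatedCone K) :=
  (measurable_snd measurableSet_Ioc).inter (hK.preimage (measurable_snd.inv.smul measurable_fst))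

theorem preimage_mk_truncatedCone (K : Set E) {t : ℝ} (ht : t ∈ Ioc 0 1) :
    (fun x => (x, t)) ⁻¹' truncatedCone K = t • K := by
  ext x
  rw [mem_smul_set_iff_inv_smul_mem₀ ht.1.ne']
  exact and_iff_right ht

theorem preimage_mk_truncatedCone_of_notMem (K : Set E) {t : ℝ} (ht : t ∉ Ioc 0 1) :
    (fun x => (x, t)) ⁻¹' truncatedCone K = ∅ := by
  ext x
  exact ⟨fun h => ht h.1, False.elim⟩

theorem prod_volume_truncatedCone [MeasurableSpace E] [BorelSpace E] [FiniteDimensional ℝ E]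
    (ν : Measure E) [ν.IsAddHaarMeasure] {K : Set E} (hK : MeasurableSet K) :
    ν.prod volume (truncatedCone K) = ENNReal.ofReal (1 / (finrank ℝ E + 1)) * ν K := by
  have hslice : ∀ t : ℝ, ν ((fun x => (x, t)) ⁻¹' truncatedCone K) =
      (Ioc 0 1).indicator (fun t => ENNReal.ofReal (t ^ finrank ℝ E) * ν K) t := by
    intro t
    by_cases ht : t ∈ Ioc 0 1
    · rw [preimage_mk_truncatedCone K ht, Measure.addHaar_smul, indicator_of_mem ht,
        abs_of_nonneg (pow_nonneg ht.1.le _)]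
    · rw [preimage_mk_truncatedCone_of_notMem K ht, indicator_of_notMem ht, measure_empty]
  rw [Measure.prod_apply_symm (measurableSet_truncatedCone hK), funext hslice,
    lintegral_indicator measurableSet_Ioc, lintegral_mul_const _ (by fun_prop),
    lintegral_Ioc_zero_one_ofReal_pow]

theorem setOf_perspective_eq_preimage_truncatedCone [MeasurableSpace E] (Q : Set E)
    (f g : E → ℝ) :
    {p : E × ℝ × ℝ | 0 < p.2.2 ∧ p.2.2 ≤ 1 ∧ p.1 ∈ p.2.2 • Q ∧
        p.2.2 * f (p.2.2⁻¹ • p.1) ≤ p.2.1 ∧ p.2.1 ≤ p.2.2 * g (p.2.2⁻¹ • p.1)} =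
      MeasurableEquiv.prodAssoc.symm ⁻¹'
        truncatedCone {p : E × ℝ | p.1 ∈ Q ∧ p.2 ∈ Icc (f p.1) (g p.1)} := by
  ext ⟨x, y, z⟩
  change _ ↔ z ∈ Ioc 0 1 ∧ z⁻¹ • x ∈ Q ∧
    z⁻¹ * y ∈ Icc (f (z⁻¹ • x)) (g (z⁻¹ • x))
  by_cases hz : 0 < z
  · simp only [mem_ofPred_eq, mem_Ioc, mem_Icc, mem_smul_set_iff_inv_smul_mem₀ hz.ne',
      le_inv_mul_iff₀ hz, inv_mul_le_iff₀ hz]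
    tauto
  · simp [hz]

end TruncatedCone

theorem stmt_0_general (d : ℕ) (V : Finset (Fin d → ℝ)) (Q : Set (Fin d → ℝ))
    (hQ : Q = convexHull ℝ (V : Set (Fin d → ℝ)))
    (f μ : (Fin d → ℝ) → ℝ)
    (hfc : ContinuousOn f Q)
    (hμc : ContinuousOn μ Q)
    (hμf : ∀ x ∈ Q, f x ≤ μ x) :
    (volume {p : (Fin d → ℝ) × ℝ × ℝ |
        0 < p.2.2 ∧ p.2.2 ≤ 1 ∧ p.1 ∈ p.2.2 • Q ∧
        p.2.2 * f (p.2.2⁻¹ • p.1) ≤ p.2.1 ∧ p.2.1 ≤ p.2.2 * μ (p.2.2⁻¹ • p.1)}).toReal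
      = (1 / ((d : ℝ) + 2)) * (∫ x in Q, μ x) - (1 / ((d : ℝ) + 2)) * (∫ x in Q, f x) := by
  have hQc : IsCompact Q := hQ ▸ V.finite_toSet.isCompact_convexHull (𝕜 := ℝ)
  have hQm : MeasurableSet Q := hQc.isClosed.measurableSet
  have hfi : IntegrableOn f Q := hfc.integrableOn_compact hQc
  have hμi : IntegrableOn μ Q := hμc.integrableOn_compact hQc
  set R := {p : (Fin d → ℝ) × ℝ | p.1 ∈ Q ∧ p.2 ∈ Icc (f p.1) (μ p.1)}
  have hR : MeasurableSet R :=
    (hQc.isClosed.isClosed_region_between_cc hfc hμc).measurableSet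
  have hfin : finrank ℝ ((Fin d → ℝ) × ℝ) = d + 1 := by simp
  have hint : 0 ≤ ∫ x in Q, μ x - f x :=
    setIntegral_nonneg hQm fun x hx => sub_nonneg.2 (hμf x hx)
  rw [setOf_perspective_eq_preimage_truncatedCone,
    volume_preserving_prodAssoc.symm.measure_preimage_equiv, Measure.volume_eq_prod,
    Measure.volume_eq_prod (α := Fin d → ℝ), prod_volume_truncatedCone _ hR,
    volume_region_between_cc_eq_integral hR hQm hfi hμi hμf, hfin,
    ← ENNReal.ofReal_mul (by positivity),
    ENNReal.toReal_ofReal (mul_nonneg (by positivity) hint), integral_sub hμi hfi]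
  push_cast
  ring

/-- Volume of the perspective relaxation of the disjunction between the origin
and a polytope `Q`, for a convex function `f` and a concave upper bound `μ`. -/
theorem stmt_0 (d : ℕ) (V : Finset (Fin d → ℝ)) (Q : Set (Fin d → ℝ))
    (hQ : Q = convexHull ℝ (V : Set (Fin d → ℝ)))
    (hQnonneg : ∀ x ∈ Q, ∀ i, 0 ≤ x i)
    (hQ0 : (0 : Fin d → ℝ) ∉ Q)
    (f μ : (Fin d → ℝ) → ℝ)
    (hfc : ContinuousOn f Q) (hfv : ConvexOn ℝ Q f)
    (hμc : ContinuousOn μ Q) (hμv : ConcaveOn ℝ Q μ)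
    (hμf : ∀ x ∈ Q, f x ≤ μ x) :
    (volume {p : (Fin d → ℝ) × ℝ × ℝ |
        0 < p.2.2 ∧ p.2.2 ≤ 1 ∧ p.1 ∈ p.2.2 • Q ∧
        p.2.2 * f (p.2.2⁻¹ • p.1) ≤ p.2.1 ∧ p.2.1 ≤ p.2.2 * μ (p.2.2⁻¹ • p.1)}).toReal
      = (1 / ((d : ℝ) + 2)) * (∫ x in Q, μ x) - (1 / ((d : ℝ) + 2)) * (∫ x in Q, f x) :=
  stmt_0_general d V Q hQ f μ hfc hμc hμf
end

section
/- Let d ≥ 1, let c ∈ ℝ^d with c > 0 componentwise, let v₀ ∈ ℝ^d with v₀ > 0 componentwise, let u > 0, let q ≥ 1 be a real number, and set f(x) := (cᵀx)^q and Q_u := v₀ + u·[0,1]^d. Then (1/(d+2))·∫_{Q_u} f(x) dx − ∫_0^1 z^d · (∫_{Q_u} f(z·x) dx) dz = ((q−1)/((d+2)(q+d+1))) · u^{q+d} · ∫_{[0,1]^d} (cᵀy + (cᵀv₀)/u)^q dy. -/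
/-!
The box `Q_u` lies in the nonnegative orthant, where `f` is positively homogeneous of degree `q`;
hence `∫_{Q_u} f(z x) dx = z^q ∫_{Q_u} f` and the radial integral equals
`∫_0^1 z^(d+q) dz · ∫_{Q_u} f = ∫_{Q_u} f / (q+d+1)`, so the left-hand side is
`(1/(d+2) - 1/(q+d+1)) ∫_{Q_u} f`. Substituting `x = v₀ + u y` and factoring
`cᵀ(v₀ + u y) = u (cᵀy + cᵀv₀/u)` gives `∫_{Q_u} f = u^(q+d) ∫_{[0,1]^d} (cᵀy + cᵀv₀/u)^q`.
-/

open MeasureTheory Module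

theorem setIntegral_image_add_smul {E F : Type*} [NormedAddCommGroup E] [NormedSpace ℝ E]
    [FiniteDimensional ℝ E] [MeasurableSpace E] [BorelSpace E] (μ : Measure E)
    [μ.IsAddHaarMeasure] [NormedAddCommGroup F] [NormedSpace ℝ F] (v : E) {u : ℝ} (hu : 0 < u)
    {s : Set E} (hs : MeasurableSet s) (g : E → F) :
    ∫ x in (fun y => v + u • y) '' s, g x ∂μ = u ^ finrank ℝ E • ∫ y in s, g (v + u • y) ∂μ := by
  have hderiv (y : E) : HasFDerivAt (fun y => v + u • y) (u • ContinuousLinearMap.id ℝ E) y :=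
    ((u • ContinuousLinearMap.id ℝ E).hasFDerivAt).const_add v
  have hinj : Set.InjOn (fun y => v + u • y) s := fun a _ b _ h =>
    smul_right_injective E hu.ne' (add_left_cancel h)
  rw [integral_image_eq_integral_abs_det_fderiv_smul μ hs
    (fun y _ => (hderiv y).hasFDerivWithinAt) hinj, integral_smul]
  simp [ContinuousLinearMap.det, LinearMap.det_smul, abs_of_pos hu]

theorem sum_mul_smul_rpow {ι : Type*} [Fintype ι] (c x : ι → ℝ) {z : ℝ} (hz : 0 ≤ z)
    (hx : 0 ≤ ∑ i, c i * x i) (q : ℝ) :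
    (∑ i, c i * (z • x) i) ^ q = z ^ q * (∑ i, c i * x i) ^ q := by
  have : ∑ i, c i * (z • x) i = z * ∑ i, c i * x i := by
    simp only [Pi.smul_apply, smul_eq_mul, Finset.mul_sum, mul_left_comm]
  rw [this, Real.mul_rpow hz hx]

theorem sum_mul_add_smul {ι : Type*} [Fintype ι] (c v y : ι → ℝ) {u : ℝ} (hu : u ≠ 0) :
    ∑ i, c i * (v + u • y) i = u * (∑ i, c i * y i + (∑ i, c i * v i) / u) := by
  simp only [Pi.add_apply, Pi.smul_apply, smul_eq_mul, mul_add, Finset.sum_add_distrib,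
    Finset.mul_sum, mul_div_cancel₀ _ hu, mul_left_comm (c _) u]
  ring

theorem integral_pow_mul_rpow_zero_one (n : ℕ) {q : ℝ} (hq : 0 ≤ q) :
    ∫ z in (0 : ℝ)..1, z ^ n * z ^ q = 1 / (q + n + 1) := by
  have hsum : (-1 : ℝ) < q + n := by linarith [(n.cast_nonneg : (0 : ℝ) ≤ n)]
  calc ∫ z in (0 : ℝ)..1, z ^ n * z ^ q = ∫ z in (0 : ℝ)..1, z ^ (q + n) := by
        refine intervalIntegral.integral_congr fun z hz => ?_
        rw [Set.uIcc_of_le zero_le_one] at hz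
        rw [Real.rpow_add_of_nonneg hz.1 hq n.cast_nonneg, Real.rpow_natCast, mul_comm]
    _ = 1 / (q + n + 1) := by
        rw [integral_rpow (Or.inl hsum), Real.one_rpow, Real.zero_rpow (by linarith)]
        ring

theorem setIntegral_sum_mul_smul_rpow {ι : Type*} [Fintype ι] [MeasurableSpace (ι → ℝ)]
    {μ : Measure (ι → ℝ)} (c : ι → ℝ) {s : Set (ι → ℝ)} (hs : MeasurableSet s)
    (hs_nonneg : ∀ x ∈ s, 0 ≤ ∑ i, c i * x i) {z : ℝ} (hz : 0 ≤ z) (q : ℝ) :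
    ∫ x in s, (∑ i, c i * (z • x) i) ^ q ∂μ = z ^ q * ∫ x in s, (∑ i, c i * x i) ^ q ∂μ := by
  rw [← integral_const_mul]
  exact setIntegral_congr_fun hs fun x hx => sum_mul_smul_rpow c x hz (hs_nonneg x hx) q

theorem setIntegral_image_add_smul_sum_mul_rpow {d : ℕ} (c v : Fin d → ℝ) {u : ℝ} (hu : 0 < u)
    {s : Set (Fin d → ℝ)} (hs : MeasurableSet s)
    (hs_nonneg : ∀ y ∈ s, 0 ≤ ∑ i, c i * y i + (∑ i, c i * v i) / u) (q : ℝ) :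
    ∫ x in (fun y => v + u • y) '' s, (∑ i, c i * x i) ^ q
      = u ^ (q + d) * ∫ y in s, (∑ i, c i * y i + (∑ i, c i * v i) / u) ^ q := by
  rw [setIntegral_image_add_smul volume v hu hs, finrank_fin_fun, smul_eq_mul,
    Real.rpow_add hu, Real.rpow_natCast, mul_comm (u ^ q), mul_assoc]
  congr 1
  rw [← integral_const_mul]
  exact setIntegral_congr_fun hs fun y hy => by
    rw [sum_mul_add_smul c v y hu.ne', Real.mul_rpow hu.le (hs_nonneg y hy)]

theorem stmt_6_general (d : ℕ) (c v₀ : Fin d → ℝ)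
    (hc : ∀ i, 0 < c i) (hv : ∀ i, 0 < v₀ i) (u : ℝ) (hu : 0 < u)
    (q : ℝ) (hq : 1 ≤ q)
    (f : (Fin d → ℝ) → ℝ) (hf : f = fun x => (∑ i, c i * x i) ^ q)
    (Qu : Set (Fin d → ℝ))
    (hQu : Qu = (fun y : Fin d → ℝ => v₀ + u • y) '' Set.Icc (0 : Fin d → ℝ) 1) :
    (1 / ((d : ℝ) + 2)) * (∫ x in Qu, f x)
        - ∫ z in (0:ℝ)..1, z ^ d * ∫ x in Qu, f (z • x)
      = ((q - 1) / (((d : ℝ) + 2) * (q + (d : ℝ) + 1))) * u ^ (q + (d : ℝ)) *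
          ∫ y in Set.Icc (0 : Fin d → ℝ) 1,
            (∑ i, c i * y i + (∑ i, c i * v₀ i) / u) ^ q := by
  subst hf
  have hform_nonneg {x : Fin d → ℝ} (hx : 0 ≤ x) : 0 ≤ ∑ i, c i * x i :=
    Finset.sum_nonneg fun i _ => mul_nonneg (hc i).le (hx i)
  have hQu_meas : MeasurableSet Qu :=
    hQu ▸ (isCompact_Icc.image (by fun_prop)).isClosed.measurableSet
  have hQu_nonneg (x : Fin d → ℝ) (hx : x ∈ Qu) : 0 ≤ ∑ i, c i * x i := by
    obtain ⟨y, hy, rfl⟩ := hQu ▸ hx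
    exact hform_nonneg (add_nonneg (fun i => (hv i).le) (smul_nonneg hu.le hy.1))
  have hradial : ∫ z in (0:ℝ)..1, z ^ d * ∫ x in Qu, (∑ i, c i * (z • x) i) ^ q
      = (∫ z in (0:ℝ)..1, z ^ d * z ^ q) * ∫ x in Qu, (∑ i, c i * x i) ^ q := by
    rw [← intervalIntegral.integral_mul_const]
    refine intervalIntegral.integral_congr fun z hz => ?_
    rw [Set.uIcc_of_le zero_le_one] at hz
    simp only [setIntegral_sum_mul_smul_rpow c hQu_meas hQu_nonneg hz.1, mul_assoc]
  have hbox := setIntegral_image_add_smul_sum_mul_rpow c v₀ hu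
    (measurableSet_Icc (a := (0 : Fin d → ℝ)) (b := 1))
    (fun y hy => add_nonneg (hform_nonneg hy.1) (div_nonneg (hform_nonneg fun i => (hv i).le)
      hu.le)) q
  have hq' : q + d + 1 ≠ 0 := by positivity
  beta_reduce
  calc _ = ((q - 1) / ((d + 2) * (q + d + 1))) * ∫ x in Qu, (∑ i, c i * x i) ^ q := by
        rw [hradial, integral_pow_mul_rpow_zero_one d (by linarith)]
        field_simp
        ring
    _ = _ := by rw [hQu, hbox, mul_assoc]

/-- Cut-off amount for the power of a linear form `f(x) = (cᵀx)^q` on the box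
`Q_u = v₀ + u·[0,1]^d`. -/
theorem stmt_6 (d : ℕ) (hd : 1 ≤ d) (c v₀ : Fin d → ℝ)
    (hc : ∀ i, 0 < c i) (hv : ∀ i, 0 < v₀ i) (u : ℝ) (hu : 0 < u)
    (q : ℝ) (hq : 1 ≤ q)
    (f : (Fin d → ℝ) → ℝ) (hf : f = fun x => (∑ i, c i * x i) ^ q)
    (Qu : Set (Fin d → ℝ))
    (hQu : Qu = (fun y : Fin d → ℝ => v₀ + u • y) '' Set.Icc (0 : Fin d → ℝ) 1) :
    (1 / ((d : ℝ) + 2)) * (∫ x in Qu, f x)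
        - ∫ z in (0:ℝ)..1, z ^ d * ∫ x in Qu, f (z • x)
      = ((q - 1) / (((d : ℝ) + 2) * (q + (d : ℝ) + 1))) * u ^ (q + (d : ℝ)) *
          ∫ y in Set.Icc (0 : Fin d → ℝ) 1,
            (∑ i, c i * y i + (∑ i, c i * v₀ i) / u) ^ q :=
  stmt_6_general d c v₀ hc hv u hu q hq f hf Qu hQu
end

section
/- Let n ≥ 1, let c ∈ ℝ^n, and let q be an integer with q > 1. Then ∫_{[0,1]^n} (cᵀy)^q dy = Σ_{α ∈ ℕ^n, α₁+⋯+αₙ = q} q! · c₁^{α₁}⋯cₙ^{αₙ} / ((α₁+1)!⋯(αₙ+1)!), where the sum ranges over all multi-indices α ∈ ℕ^n with |α| = q. -/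
/-!
Expand `(cᵀy)^q` by the multinomial theorem. Each monomial `∏ (cᵢ yᵢ)^αᵢ` is a product of
functions of single coordinates, so its integral over the cube is `∏ cᵢ^αᵢ / (αᵢ + 1)`, and
`multinomial α / ∏ (αᵢ + 1) = q! / ∏ (αᵢ + 1)!`.
-/

open MeasureTheory Finset

theorem integral_Icc_zero_one_pow (a : ℕ) :
    ∫ t in Set.Icc (0 : ℝ) 1, t ^ a = 1 / (a + 1) := by
  rw [integral_Icc_eq_integral_Ioc, ← intervalIntegral.integral_of_le zero_le_one, integral_pow]
  simp

theorem setIntegral_Icc_pi_prod {ι 𝕜 : Type*} [Fintype ι] [RCLike 𝕜] (f : ι → ℝ → 𝕜)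
    (a b : ι → ℝ) :
    ∫ y in Set.Icc a b, ∏ i, f i (y i) = ∏ i, ∫ t in Set.Icc (a i) (b i), f i t := by
  rw [← Set.pi_univ_Icc, volume_pi, Measure.restrict_pi_pi, integral_fintype_prod_eq_prod]

theorem setIntegral_unitCube_prod_mul_pow {ι : Type*} [Fintype ι] (c : ι → ℝ) (α : ι → ℕ) :
    ∫ y in Set.Icc (0 : ι → ℝ) 1, ∏ i, (c i * y i) ^ α i
      = ∏ i, c i ^ α i / (α i + 1) := by
  simp_rw [mul_pow, prod_mul_distrib, integral_const_mul]
  rw [setIntegral_Icc_pi_prod (fun i t => t ^ α i)]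
  simp only [Pi.zero_apply, Pi.one_apply, integral_Icc_zero_one_pow, ← prod_mul_distrib,
    mul_one_div]

theorem Nat.cast_multinomial_div_prod_succ {ι : Type*} (s : Finset ι) (α : ι → ℕ) :
    (Nat.multinomial s α : ℝ) / ∏ i ∈ s, ((α i : ℝ) + 1)
      = (∑ i ∈ s, α i).factorial / ∏ i ∈ s, ((α i + 1).factorial : ℝ) := by
  have hspec := congrArg (Nat.cast (R := ℝ)) (Nat.multinomial_spec s α)
  push_cast at hspec
  simp_rw [Nat.factorial_succ, Nat.cast_mul, prod_mul_distrib, ← hspec]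
  have : ∏ i ∈ s, ((α i).factorial : ℝ) ≠ 0 :=
    prod_ne_zero_iff.mpr fun i _ => by positivity
  push_cast
  field_simp

theorem setIntegral_unitCube_sum_mul_pow {ι : Type*} [Fintype ι] [DecidableEq ι]
    (c : ι → ℝ) (q : ℕ) :
    ∫ y in Set.Icc (0 : ι → ℝ) 1, (∑ i, c i * y i) ^ q
      = ∑ α ∈ piAntidiag univ q,
          (q.factorial : ℝ) * (∏ i, c i ^ α i) / ∏ i, ((α i + 1).factorial : ℝ) := by
  simp_rw [sum_pow_eq_sum_piAntidiag]
  rw [integral_finsetSum _ fun α _ => (by fun_prop : Continuous _).integrableOn_Icc]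
  refine sum_congr rfl fun α hα => ?_
  rw [integral_const_mul, setIntegral_unitCube_prod_mul_pow, prod_div_distrib,
    ← (mem_piAntidiag.mp hα).1, mul_div_right_comm, ← Nat.cast_multinomial_div_prod_succ]
  ring

theorem stmt_7_general (n : ℕ) (c : Fin n → ℝ) (q : ℕ) :
    ∫ y in Set.Icc (0 : Fin n → ℝ) 1, (∑ i, c i * y i) ^ q
      = ∑ α ∈ Finset.Nat.antidiagonalTuple n q,
          (q.factorial : ℝ) * (∏ i, c i ^ α i) / ∏ i, ((α i + 1).factorial : ℝ) := by
  have hindex : piAntidiag univ q = Finset.Nat.antidiagonalTuple n q := by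
    ext α
    simp [mem_piAntidiag, Finset.Nat.mem_antidiagonalTuple]
  rw [← hindex, setIntegral_unitCube_sum_mul_pow]

/-- Multinomial formula for the integral of `(cᵀy)^q` over the unit hypercube. -/
theorem stmt_7 (n : ℕ) (hn : 1 ≤ n) (c : Fin n → ℝ) (q : ℕ) (hq : 1 < q) :
    ∫ y in Set.Icc (0 : Fin n → ℝ) 1, (∑ i, c i * y i) ^ q
      = ∑ α ∈ Finset.Nat.antidiagonalTuple n q,
          (q.factorial : ℝ) * (∏ i, c i ^ α i) / ∏ i, ((α i + 1).factorial : ℝ) :=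
  stmt_7_general n c q
end

section
/- Let n ≥ 1, let c ∈ ℝ^n satisfy the genericity condition that Σ_{j∈S} c_j ≠ 0 for every nonempty subset S ⊆ {1,…,n}, and let q be an integer with q > 1. Define w₀ := 0 ∈ ℝ^n and w_j := e_{n+1−j} + e_{n+2−j} + ⋯ + e_n for j = 1,…,n (where e_ℓ is the ℓ-th standard unit vector), and for a permutation σ of {1,…,n} let c_σ := (c_{σ(1)},…,c_{σ(n)}). Then ∫_{[0,1]^n} (cᵀy)^q dy = Σ_{σ} (q!/(q+n)!) · Σ_{j=0}^n (c_σᵀ w_j)^{q+n} / ∏_{k≠j} (c_σᵀ(w_j − w_k)), where the outer sum is over all permutations σ of {1,…,n}. -/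
/-!
Integrating out one coordinate at a time (Fubini and the fundamental theorem of calculus
applied to `x ↦ c₀ (a + c₀ x)^m`) gives, for every `t`, the inclusion–exclusion formula
`(∏ cᵢ) ∫_{[0,1]^n} (t + cᵀy)^q dy = q!/(q+n)! ∑_{S ⊆ [n]} (-1)^(n-|S|) (t + c(S))^(q+n)`,
where `c(S) = ∑_{i ∈ S} cᵢ`.

For each `σ` the inner sum over `j` is the divided difference `f[c_σᵀw₀, …, c_σᵀwₙ]` of
`f = x^(q+n)`, and the vertex values `c_σᵀw_j` are partial sums `c(S)`. For any `f`,
`∑_σ f[c_σᵀw₀, …, c_σᵀwₙ] = ∑_S (-1)^(n-|S|) f(c(S)) / ∏ cᵢ`, by induction on `n`: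
splitting off the top vertex `c_σᵀwₙ = c([n])` leaves divided differences of
`f(x) / (x - c([n]))` over the permutations fixing the value `p` of `σ` at the first coordinate,
to which the induction hypothesis applies; summing over `p` produces the factor
`∑_{p ∉ S} c_p = c([n]) - c(S)`, which cancels the new denominator. The top-vertex terms add
up to `f(c([n])) / ∏ cᵢ` by the classical identity `∑_σ ∏_k (c_{σ k} + ⋯ + c_{σ n})⁻¹ = (∏ cᵢ)⁻¹`.
-/

open MeasureTheory Finset Equiv
open scoped Nat

theorem sum_powerset_map {α β M : Type*} [AddCommMonoid M] (f : α ↪ β) (s : Finset α)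
    (g : Finset β → M) : ∑ T ∈ (s.map f).powerset, g T = ∑ S ∈ s.powerset, g (S.map f) := by
  classical
  simp_rw [map_eq_image]
  rw [powerset_image, sum_image (image_injOn_powerset_of_injOn f.injective.injOn)]

theorem sum_powerset_univ_fin_succ_neg_one_pow_mul {R : Type*} [CommRing R] {n : ℕ}
    (c : Fin (n + 1) → R) (h : R → R) :
    ∑ S ∈ univ.powerset, (-1) ^ (n + 1 - #S) * h (∑ i ∈ S, c i)
      = ∑ S ∈ (univ : Finset (Fin n)).powerset,
          (-1) ^ (n - #S) * (h (c 0 + ∑ i ∈ S, c i.succ) - h (∑ i ∈ S, c i.succ)) := by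
  rw [Fin.univ_succ, cons_eq_insert, sum_powerset_insert (by simp), sum_powerset_map,
    sum_powerset_map, ← sum_add_distrib]
  refine sum_congr rfl fun S hS => ?_
  have hS : #S ≤ n := by simpa using card_le_card (mem_powerset.1 hS)
  have h0 : (0 : Fin (n + 1)) ∉ S.map ⟨Fin.succ, Fin.succ_injective n⟩ := by simp
  rw [sum_insert h0, card_insert_of_notMem h0, card_map, sum_map,
    show n + 1 - #S = n - #S + 1 by omega, show n + 1 - (#S + 1) = n - #S by omega, pow_succ]
  simp only [Function.Embedding.coeFn_mk]
  ring

theorem sum_sum_powerset_erase_mul {α R : Type*} [Fintype α] [DecidableEq α] [CommSemiring R]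
    (h : Finset α → R) (c : α → R) :
    ∑ p, ∑ T ∈ (univ.erase p).powerset, h T * c p = ∑ T ∈ univ.powerset, h T * ∑ p ∈ Tᶜ, c p := by
  simp_rw [mul_sum]
  refine sum_comm' fun p T => ?_
  simp [subset_erase]

theorem setIntegral_Icc_zero_one_mul_add_mul_pow (a b : ℝ) (m : ℕ) :
    ∫ x in Set.Icc (0 : ℝ) 1, b * (a + b * x) ^ m
      = ((a + b) ^ (m + 1) - a ^ (m + 1)) / (m + 1) := by
  have hderiv : ∀ x ∈ Set.uIcc (0 : ℝ) 1,
      HasDerivAt (fun x => (a + b * x) ^ (m + 1) / (m + 1)) (b * (a + b * x) ^ m) x := by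
    intro x _
    refine ((((hasDerivAt_id x).const_mul b).const_add a).pow (m + 1) |>.div_const
      ((m : ℝ) + 1)).congr_deriv ?_
    simp only [id, mul_one, add_tsub_cancel_right]
    push_cast
    field_simp
  rw [integral_Icc_eq_integral_Ioc, ← intervalIntegral.integral_of_le zero_le_one,
    intervalIntegral.integral_eq_sub_of_hasDerivAt hderiv
      (Continuous.intervalIntegrable (by fun_prop) _ _)]
  simp only [mul_one, mul_zero, add_zero]
  ring

theorem setIntegral_Icc_fin_succ {n : ℕ} (F : (Fin (n + 1) → ℝ) → ℝ) (hF : Continuous F) :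
    ∫ y in Set.Icc (0 : Fin (n + 1) → ℝ) 1, F y
      = ∫ x in Set.Icc (0 : ℝ) 1, ∫ y in Set.Icc (0 : Fin n → ℝ) 1, F (Fin.cons x y) := by
  set μ : Measure ℝ := volume.restrict (Set.Icc 0 1)
  have hcube : ∀ m : ℕ,
      volume.restrict (Set.Icc (0 : Fin m → ℝ) 1) = Measure.pi fun _ => μ := by
    intro m
    rw [← Set.pi_univ_Icc, volume_pi, Measure.restrict_pi_pi]
    rfl
  set e := MeasurableEquiv.piFinSuccAbove (fun _ : Fin (n + 1) => ℝ) 0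
  have hmp := (measurePreserving_piFinSuccAbove (fun _ : Fin (n + 1) => μ) 0).symm
  have hint : Integrable F (Measure.pi fun _ => μ) := by
    rw [← hcube]
    exact hF.continuousOn.integrableOn_compact isCompact_Icc
  rw [hcube, hcube, ← hmp.integral_comp e.symm.measurableEmbedding,
    integral_prod (fun z => F (e.symm z))
      ((hmp.integrable_comp_emb e.symm.measurableEmbedding).mpr hint)]
  simp [e, MeasurableEquiv.piFinSuccAbove_symm_apply, Fin.insertNthEquiv, Fin.insertNth_zero']

theorem prod_mul_setIntegral_Icc_add_sum_mul_pow {n : ℕ} (c : Fin n → ℝ) (t : ℝ) (q : ℕ) :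
    (∏ i, c i) * ∫ y in Set.Icc (0 : Fin n → ℝ) 1, (t + ∑ i, c i * y i) ^ q
      = q ! / (q + n)! * ∑ S ∈ univ.powerset, (-1) ^ (n - #S) * (t + ∑ i ∈ S, c i) ^ (q + n) := by
  induction n generalizing t with
  | zero =>
    have : Set.Icc (0 : Fin 0 → ℝ) 1 = Set.univ :=
      Set.eq_univ_of_forall fun y => ⟨fun i => i.elim0, fun i => i.elim0⟩
    rw [this]
    simp [Nat.factorial_ne_zero, Measure.real, volume_pi]
  | succ n ih =>
    have hfubini : ∫ y in Set.Icc (0 : Fin (n + 1) → ℝ) 1, (t + ∑ i, c i * y i) ^ q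
        = ∫ x in Set.Icc (0 : ℝ) 1, ∫ y in Set.Icc (0 : Fin n → ℝ) 1,
            (t + c 0 * x + ∑ i, c i.succ * y i) ^ q := by
      rw [setIntegral_Icc_fin_succ _ (by fun_prop)]
      simp only [Fin.sum_univ_succ, Fin.cons_zero, Fin.cons_succ, add_assoc]
    calc (∏ i, c i) * ∫ y in Set.Icc (0 : Fin (n + 1) → ℝ) 1, (t + ∑ i, c i * y i) ^ q
        = ∫ x in Set.Icc (0 : ℝ) 1, q ! / (q + n)! * ∑ S ∈ (univ : Finset (Fin n)).powerset,
            (-1) ^ (n - #S) * (c 0 * (t + ∑ i ∈ S, c i.succ + c 0 * x) ^ (q + n)) := by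
          rw [Fin.prod_univ_succ, hfubini, ← integral_const_mul]
          refine setIntegral_congr_fun measurableSet_Icc fun x _ => ?_
          rw [mul_assoc, ih (fun i => c i.succ), mul_sum, mul_sum, mul_sum]
          exact sum_congr rfl fun S _ => by ring
      _ = q ! / (q + n)! * ∑ S ∈ (univ : Finset (Fin n)).powerset, (-1) ^ (n - #S) *
            (((t + (c 0 + ∑ i ∈ S, c i.succ)) ^ (q + n + 1) - (t + ∑ i ∈ S, c i.succ) ^ (q + n + 1))
              / (q + n + 1)) := by
          rw [integral_const_mul, integral_finsetSum _ fun S _ =>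
            (Continuous.integrableOn_Icc (by fun_prop))]
          congr 1
          refine sum_congr rfl fun S _ => ?_
          rw [integral_const_mul, setIntegral_Icc_zero_one_mul_add_mul_pow]
          push_cast
          ring
      _ = q ! / (q + (n + 1))! * ∑ S ∈ univ.powerset,
            (-1) ^ (n + 1 - #S) * (t + ∑ i ∈ S, c i) ^ (q + (n + 1)) := by
          rw [sum_powerset_univ_fin_succ_neg_one_pow_mul c fun s => (t + s) ^ (q + (n + 1)),
            mul_sum, mul_sum]
          refine sum_congr rfl fun S _ => ?_
          rw [show q + (n + 1) = q + n + 1 by ring, Nat.factorial_succ]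
          push_cast
          field_simp

def IsGeneric {ι M : Type*} [AddCommMonoid M] (c : ι → M) : Prop :=
  ∀ S : Finset ι, S.Nonempty → ∑ j ∈ S, c j ≠ 0

namespace IsGeneric
variable {ι κ M : Type*} {c : ι → M}

theorem ne_zero [AddCommMonoid M] (hc : IsGeneric c) (i : ι) : c i ≠ 0 := by
  simpa using hc {i} (singleton_nonempty i)

theorem comp_injective [AddCommMonoid M] (hc : IsGeneric c) {e : κ → ι}
    (he : Function.Injective e) : IsGeneric (c ∘ e) := fun S hS => by
  simpa [sum_map] using hc (S.map ⟨e, he⟩) hS.map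

theorem sum_compl_ne_zero [AddCommMonoid M] [Fintype ι] [DecidableEq ι] (hc : IsGeneric c)
    {S : Finset ι} (hS : S ≠ univ) : ∑ i ∈ Sᶜ, c i ≠ 0 :=
  hc Sᶜ (by rwa [nonempty_iff_ne_empty, ne_eq, compl_eq_empty_iff])

end IsGeneric

section DivDiff
variable {K : Type*} [Field K]

def divDiff (f : K → K) (x : ℕ → K) (m : ℕ) : K :=
  ∑ j ∈ range (m + 1), f (x j) / ∏ k ∈ (range (m + 1)).erase j, (x j - x k)

theorem divDiff_congr (f : K → K) {x y : ℕ → K} {m : ℕ} (h : ∀ j ≤ m, x j = y j) :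
    divDiff f x m = divDiff f y m := by
  refine sum_congr rfl fun j hj => ?_
  have hx : ∀ k ∈ range (m + 1), x k = y k := fun k hk =>
    h k (Nat.lt_succ_iff.1 (mem_range.1 hk))
  rw [hx j hj, prod_congr rfl fun k hk => by rw [hx k (mem_of_mem_erase hk)]]

theorem divDiff_succ (f : K → K) (x : ℕ → K) (m : ℕ) :
    divDiff f x (m + 1) = divDiff (fun y => f y / (y - x (m + 1))) x m
      + f (x (m + 1)) / ∏ k ∈ range (m + 1), (x (m + 1) - x k) := by
  rw [divDiff, sum_range_succ, range_add_one (n := m + 1), erase_insert notMem_range_self]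
  congr 1
  refine sum_congr rfl fun j hj => ?_
  rw [erase_insert_of_ne (ne_of_mem_of_not_mem hj notMem_range_self).symm, prod_insert (by simp),
    div_div, mul_comm]

end DivDiff

def succSwap {n : ℕ} (p : Fin (n + 1)) : Fin n ↪ Fin (n + 1) :=
  (Fin.succEmb n).trans (swap 0 p).toEmbedding

theorem map_univ_succSwap {n : ℕ} (p : Fin (n + 1)) : univ.map (succSwap p) = univ.erase p := by
  have hsucc : univ.map (Fin.succEmb n) = univ.erase 0 := by
    rw [Fin.univ_succ, erase_cons]
    rfl
  rw [succSwap, ← map_map, hsucc, map_erase, map_univ_equiv, toEmbedding_apply, swap_apply_left]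

section VertexSum
variable {M : Type*} {n : ℕ}

/-- `vertexSum c σ j` is the paper's `c_σᵀ w_j`, `w_j` having ones in its last `j` coordinates. -/
def vertexSum [AddCommMonoid M] (c : Fin n → M) (σ : Perm (Fin n)) (j : ℕ) : M :=
  ∑ i ∈ univ.filter (fun i : Fin n => n - j ≤ i.val), c (σ i)

theorem vertexSum_of_le [AddCommMonoid M] (c : Fin n → M) (σ : Perm (Fin n)) {j : ℕ}
    (hj : n ≤ j) : vertexSum c σ j = ∑ i, c i := by
  rw [vertexSum, filter_true_of_mem fun i _ => by omega, Equiv.sum_comp σ c]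

theorem vertexSum_decomposeFin_symm [AddCommMonoid M] (c : Fin (n + 1) → M) (p : Fin (n + 1))
    (τ : Perm (Fin n)) {j : ℕ} (hj : j ≤ n) :
    vertexSum c (Perm.decomposeFin.symm (p, τ)) j = vertexSum (c ∘ succSwap p) τ j := by
  rw [vertexSum, vertexSum, sum_filter, sum_filter, Fin.sum_univ_succ, if_neg (by simp only [Fin.val_zero]; omega)]
  simp only [Perm.decomposeFin_symm_apply_succ, Fin.val_succ, zero_add]
  exact sum_congr rfl fun i _ => if_congr (by omega) rfl rfl

theorem sum_sub_vertexSum_mul_revPerm [AddCommGroup M] (c : Fin n → M) (σ : Perm (Fin n)) {k : ℕ}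
    (hk : k ≤ n) : ∑ i, c i - vertexSum c (σ * Fin.revPerm) k = vertexSum c σ (n - k) := by
  rw [sub_eq_iff_eq_add', vertexSum, vertexSum, ← Equiv.sum_comp (σ * Fin.revPerm) c,
    ← sum_filter_add_sum_filter_not univ (fun i : Fin n => n - k ≤ i.val)]
  congr 1
  rw [sum_filter, sum_filter, ← Equiv.sum_comp Fin.revPerm]
  refine sum_congr rfl fun i _ => ?_
  simp only [Perm.mul_apply, Fin.revPerm_apply, Fin.rev_rev, Fin.val_rev]
  exact if_congr (by omega) rfl rfl

end VertexSum

section Simplices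
variable {K : Type*} [Field K]

theorem sum_perm_inv_prod_vertexSum {n : ℕ} {c : Fin n → K} (hc : IsGeneric c) :
    ∑ σ : Perm (Fin n), (∏ j ∈ range n, vertexSum c σ (j + 1))⁻¹ = (∏ i, c i)⁻¹ := by
  induction n with
  | zero => simp
  | succ n ih =>
    have hsplit : ∀ p τ,
        ∏ j ∈ range (n + 1), vertexSum c (Perm.decomposeFin.symm (p, τ)) (j + 1)
          = (∏ j ∈ range n, vertexSum (c ∘ succSwap p) τ (j + 1)) * ∑ i, c i := by
      intro p τ
      rw [prod_range_succ, vertexSum_of_le _ _ le_rfl]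
      congr 1
      exact prod_congr rfl fun j hj => vertexSum_decomposeFin_symm c p τ (mem_range.1 hj)
    have hdrop : ∀ p, (∏ i, (c ∘ succSwap p) i)⁻¹ = c p * (∏ i, c i)⁻¹ := by
      intro p
      rw [← mul_prod_erase univ c (mem_univ p), ← map_univ_succSwap, prod_map]
      field_simp [hc.ne_zero p]
      rfl
    have htot : ∑ i, c i ≠ 0 := hc univ univ_nonempty
    rw [← Perm.decomposeFin.symm.sum_comp, Fintype.sum_prod_type]
    simp_rw [hsplit, mul_inv, ← sum_mul, ih (hc.comp_injective (succSwap _).injective), hdrop,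
      ← sum_mul]
    field_simp

theorem sum_perm_inv_prod_sum_sub_vertexSum {n : ℕ} {c : Fin n → K} (hc : IsGeneric c) :
    ∑ σ : Perm (Fin n), (∏ k ∈ range n, (∑ i, c i - vertexSum c σ k))⁻¹ = (∏ i, c i)⁻¹ := by
  rw [← sum_perm_inv_prod_vertexSum hc, ← Equiv.sum_comp (Equiv.mulRight Fin.revPerm)]
  refine sum_congr rfl fun σ _ => ?_
  rw [← prod_range_reflect]
  congr 1
  refine prod_congr rfl fun j hj => ?_
  have hj := mem_range.1 hj
  rw [coe_mulRight, sum_sub_vertexSum_mul_revPerm c σ (by omega)]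
  congr 1
  omega

theorem sum_perm_divDiff_lowerVertexSum {n : ℕ} {c : Fin (n + 1) → K} (hc : IsGeneric c)
    (g : K → K) (ih : ∀ c' : Fin n → K, IsGeneric c' → ∑ τ, divDiff g (vertexSum c' τ) n
      = ∑ S ∈ univ.powerset, (-1) ^ (n - #S) * g (∑ i ∈ S, c' i) / ∏ i, c' i) :
    ∑ σ : Perm (Fin (n + 1)), divDiff g (vertexSum c σ) n
      = ∑ T ∈ univ.powerset, (-1) ^ (n - #T) * g (∑ i ∈ T, c i) * (∑ i ∈ Tᶜ, c i) / ∏ i, c i := by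
  rw [← Perm.decomposeFin.symm.sum_comp, Fintype.sum_prod_type]
  calc _ = ∑ p, ∑ τ, divDiff g (vertexSum (c ∘ succSwap p) τ) n :=
        sum_congr rfl fun p _ => sum_congr rfl fun τ _ =>
          divDiff_congr g fun j hj => vertexSum_decomposeFin_symm c p τ hj
    _ = ∑ p, ∑ T ∈ (univ.erase p).powerset,
          (-1) ^ (n - #T) * g (∑ i ∈ T, c i) / ∏ i ∈ univ.erase p, c i := by
        refine sum_congr rfl fun p _ => ?_
        rw [ih _ (hc.comp_injective (succSwap p).injective), ← map_univ_succSwap p,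
          sum_powerset_map, prod_map]
        simp [sum_map, card_map]
    _ = ∑ p, ∑ T ∈ (univ.erase p).powerset,
          (-1) ^ (n - #T) * g (∑ i ∈ T, c i) / (∏ i, c i) * c p := by
        refine sum_congr rfl fun p _ => sum_congr rfl fun T _ => ?_
        rw [← mul_prod_erase univ c (mem_univ p)]
        field_simp [hc.ne_zero p]
    _ = _ := by
        rw [sum_sum_powerset_erase_mul]
        exact sum_congr rfl fun T _ => by ring

theorem sum_perm_divDiff_vertexSum {n : ℕ} {c : Fin n → K} (hc : IsGeneric c) (f : K → K) :
    ∑ σ : Perm (Fin n), divDiff f (vertexSum c σ) n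
      = ∑ S ∈ univ.powerset, (-1) ^ (n - #S) * f (∑ i ∈ S, c i) / ∏ i, c i := by
  induction n generalizing f with
  | zero => simp [divDiff, vertexSum]
  | succ n ih =>
    have hprod : ∏ i, c i ≠ 0 := prod_ne_zero_iff.2 fun i _ => hc.ne_zero i
    set g := fun y => f y / (y - ∑ i, c i)
    have hsplit : ∀ σ, divDiff f (vertexSum c σ) (n + 1) = divDiff g (vertexSum c σ) n
        + f (∑ i, c i) / ∏ k ∈ range (n + 1), (∑ i, c i - vertexSum c σ k) := by
      intro σ
      rw [divDiff_succ, vertexSum_of_le _ _ le_rfl]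
    have htop : ∑ σ : Perm (Fin (n + 1)),
          f (∑ i, c i) / ∏ k ∈ range (n + 1), (∑ i, c i - vertexSum c σ k)
        = f (∑ i, c i) / ∏ i, c i := by
      simp_rw [div_eq_mul_inv, ← mul_sum, sum_perm_inv_prod_sum_sub_vertexSum hc]
    rw [sum_congr rfl fun σ _ => hsplit σ, sum_add_distrib,
      sum_perm_divDiff_lowerVertexSum hc g fun _ hc' => ih hc' g, htop,
      ← add_sum_erase _ _ (mem_powerset_self univ), ← add_sum_erase _ _ (mem_powerset_self univ)]
    simp only [compl_univ, sum_empty, mul_zero, zero_div, zero_add, card_univ, Fintype.card_fin,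
      tsub_self, pow_zero, one_mul]
    rw [add_comm]
    congr 1
    refine sum_congr rfl fun T hT => ?_
    obtain ⟨hT, -⟩ := mem_erase.1 hT
    have hcard : #T ≤ n := by
      simpa using card_lt_card (ssubset_univ_iff.2 hT)
    have hcompl := hc.sum_compl_ne_zero hT
    simp only [g]
    rw [← sum_add_sum_compl T c, sub_add_cancel_left, show n + 1 - #T = n - #T + 1 by omega,
      pow_succ]
    field_simp

end Simplices

theorem stmt_8_general (n : ℕ) (c : Fin n → ℝ)
    (hgen : ∀ S : Finset (Fin n), S.Nonempty → ∑ j ∈ S, c j ≠ 0)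
    (q : ℕ) :
    ∫ y in Set.Icc (0 : Fin n → ℝ) 1, (∑ i, c i * y i) ^ q
      = ∑ σ : Equiv.Perm (Fin n),
          ((q.factorial : ℝ) / ((q + n).factorial : ℝ)) *
            ∑ j ∈ Finset.range (n + 1),
              (∑ i ∈ Finset.univ.filter (fun i : Fin n => n - j ≤ i.val), c (σ i)) ^ (q + n) /
                ∏ k ∈ (Finset.range (n + 1)).erase j,
                  ((∑ i ∈ Finset.univ.filter (fun i : Fin n => n - j ≤ i.val), c (σ i)) -
                    ∑ i ∈ Finset.univ.filter (fun i : Fin n => n - k ≤ i.val), c (σ i)) := by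
  have hprod : ∏ i, c i ≠ 0 := prod_ne_zero_iff.2 fun i _ => IsGeneric.ne_zero hgen i
  have hcube := prod_mul_setIntegral_Icc_add_sum_mul_pow c 0 q
  simp only [zero_add] at hcube
  rw [← mul_sum]
  change _ = _ * ∑ σ, divDiff (· ^ (q + n)) (vertexSum c σ) n
  rw [sum_perm_divDiff_vertexSum hgen, ← sum_div, mul_div_assoc', eq_div_iff hprod, mul_comm,
    hcube]

/-- Triangulation (Brion) formula for the integral of `(cᵀy)^q` over the unit
hypercube, under the genericity condition that all nonempty partial sums of the
coordinates of `c` are nonzero.  Here `(c_σᵀ w_j) = ∑_{i : n−j ≤ i} c (σ i)`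
where `w_j` has ones in its last `j` coordinates. -/
theorem stmt_8 (n : ℕ) (hn : 1 ≤ n) (c : Fin n → ℝ)
    (hgen : ∀ S : Finset (Fin n), S.Nonempty → ∑ j ∈ S, c j ≠ 0)
    (q : ℕ) (hq : 1 < q) :
    ∫ y in Set.Icc (0 : Fin n → ℝ) 1, (∑ i, c i * y i) ^ q
      = ∑ σ : Equiv.Perm (Fin n),
          ((q.factorial : ℝ) / ((q + n).factorial : ℝ)) *
            ∑ j ∈ Finset.range (n + 1),
              (∑ i ∈ Finset.univ.filter (fun i : Fin n => n - j ≤ i.val), c (σ i)) ^ (q + n) /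
                ∏ k ∈ (Finset.range (n + 1)).erase j,
                  ((∑ i ∈ Finset.univ.filter (fun i : Fin n => n - j ≤ i.val), c (σ i)) -
                    ∑ i ∈ Finset.univ.filter (fun i : Fin n => n - k ≤ i.val), c (σ i)) :=
  stmt_8_general n c hgen q
end

section
/- Let n ≥ 1 and let q be an integer with q > 1. Then ∫_{[0,1]^n} (y₁ + y₂ + ⋯ + yₙ)^q dy = (q!/(q+n)!) · Σ_{j=0}^n (−1)^{n−j} · C(n,j) · j^{q+n}, where C(n,j) denotes the binomial coefficient. -/
/-!
Writing `Δ` for the forward difference with step `1` and `pₘ(x) = xᵐ/m!`, one shows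
`∫_{[0,1]ⁿ} (s + y₁ + ⋯ + yₙ)^q / q! dy = Δⁿ p_{q+n} (s)` by induction on `n`. Integrating out
one coordinate reduces this to `∫₀¹ Δⁿ pₘ(s + t) dt = Δⁿ⁺¹ pₘ₊₁(s)`, which is the fundamental
theorem of calculus, because `Δ` commutes with differentiation and `pₘ₊₁' = pₘ`. At `s = 0` the
binomial expansion of `Δⁿ` gives the formula.
-/

open MeasureTheory Finset fwdDiff
open scoped Nat

theorem Continuous.fwdDiff_iter {M G : Type*} [AddCommMonoid M] [TopologicalSpace M]
    [ContinuousAdd M] [AddCommGroup G] [TopologicalSpace G] [IsTopologicalAddGroup G] {g : M → G}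
    (hg : Continuous g) (h : M) (n : ℕ) :
    Continuous (Δ_[h] ^[n] g) := by
  induction n with
  | zero => exact hg
  | succ n ih =>
    rw [Function.iterate_succ_apply']
    exact (ih.comp (continuous_add_const h)).sub ih

section NormedSpace

variable {E : Type*} [NormedAddCommGroup E] [NormedSpace ℝ E]

theorem HasDerivAt.fwdDiff_iter {g G : ℝ → E} (hG : ∀ x, HasDerivAt G (g x) x) (h : ℝ) (n : ℕ)
    (x : ℝ) : HasDerivAt (Δ_[h] ^[n] G) (Δ_[h] ^[n] g x) x := by
  induction n generalizing x with
  | zero => exact hG x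
  | succ n ih =>
    rw [Function.iterate_succ_apply', Function.iterate_succ_apply']
    exact ((ih (x + h)).comp_add_const x h).sub (ih x)

theorem integral_Icc_zero_one_comp_add_left [CompleteSpace E] {g G : ℝ → E}
    (hG : ∀ x, HasDerivAt G (g x) x) (hg : Continuous g) (s : ℝ) :
    ∫ t in Set.Icc (0 : ℝ) 1, g (s + t) = Δ_[1] G s := by
  rw [integral_Icc_eq_integral_Ioc, ← intervalIntegral.integral_of_le zero_le_one,
    intervalIntegral.integral_comp_add_left g s,
    intervalIntegral.integral_eq_sub_of_hasDerivAt (fun x _ => hG x) (hg.intervalIntegrable _ _),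
    add_zero, fwdDiff]

theorem integral_Icc_zero_one_fwdDiff_iter [CompleteSpace E] {g G : ℝ → E}
    (hG : ∀ x, HasDerivAt G (g x) x) (hg : Continuous g) (n : ℕ) (s : ℝ) :
    ∫ t in Set.Icc (0 : ℝ) 1, Δ_[1] ^[n] g (s + t) = Δ_[1] ^[n + 1] G s := by
  rw [integral_Icc_zero_one_comp_add_left (HasDerivAt.fwdDiff_iter hG 1 n) (hg.fwdDiff_iter 1 n),
    Function.iterate_succ_apply']

theorem setIntegral_Icc_eq_setIntegral_insertNth {n : ℕ} (i : Fin (n + 1)) {a b : Fin (n + 1) → ℝ}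
    {f : (Fin (n + 1) → ℝ) → E} (hf : IntegrableOn f (Set.Icc a b)) :
    ∫ y in Set.Icc a b, f y =
      ∫ t in Set.Icc (a i) (b i),
        ∫ y in Set.Icc (a ∘ i.succAbove) (b ∘ i.succAbove), f (i.insertNth t y) := by
  have e := (volume_preserving_piFinSuccAbove (fun _ : Fin (n + 1) => ℝ) i).symm
  have hpre : (MeasurableEquiv.piFinSuccAbove (fun _ => ℝ) i).symm ⁻¹' Set.Icc a b =
      Set.Icc (a i) (b i) ×ˢ Set.Icc (a ∘ i.succAbove) (b ∘ i.succAbove) := by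
    ext ⟨t, y⟩
    exact Fin.insertNth_mem_Icc
  have hf' := (e.integrableOn_comp_preimage (MeasurableEquiv.measurableEmbedding _)).2 hf
  rw [hpre, Measure.volume_eq_prod] at hf'
  rw [← e.setIntegral_preimage_emb (MeasurableEquiv.measurableEmbedding _), hpre,
    Measure.volume_eq_prod]
  exact setIntegral_prod _ hf'

end NormedSpace

theorem hasDerivAt_pow_succ_div_factorial (m : ℕ) (x : ℝ) :
    HasDerivAt (fun x : ℝ => x ^ (m + 1) / (m + 1)!) (x ^ m / m !) x := by
  have h : x ^ m / m ! = (m + 1 : ℕ) * x ^ m / (m + 1)! := by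
    rw [Nat.factorial_succ]
    push_cast
    field_simp
  rw [h]
  exact (hasDerivAt_pow (m + 1) x).div_const _

theorem integral_unitCube_add_sum_pow_div_factorial (n q : ℕ) (s : ℝ) :
    ∫ y in Set.Icc (0 : Fin n → ℝ) 1, (s + ∑ i, y i) ^ q / q ! =
      Δ_[1] ^[n] (fun x : ℝ => x ^ (q + n) / (q + n)!) s := by
  induction n generalizing s with
  | zero => simp [Real.volume_Icc_pi, measureReal_def]
  | succ n ih =>
    have hf : IntegrableOn (fun y : Fin (n + 1) → ℝ => (s + ∑ i, y i) ^ q / q !)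
        (Set.Icc 0 1) :=
      (Continuous.continuousOn (by fun_prop)).integrableOn_compact isCompact_Icc
    rw [setIntegral_Icc_eq_setIntegral_insertNth 0 hf]
    simp_rw [Fin.sum_univ_succAbove _ 0, Fin.insertNth_apply_same, Fin.insertNth_apply_succAbove,
      ← add_assoc]
    simp only [Pi.zero_apply, Pi.one_apply, Pi.zero_comp, Pi.one_comp, ih]
    exact integral_Icc_zero_one_fwdDiff_iter (hasDerivAt_pow_succ_div_factorial _)
      (by fun_prop) n s

theorem stmt_9_general (n : ℕ) (q : ℕ) :
    ∫ y in Set.Icc (0 : Fin n → ℝ) 1, (∑ i, y i) ^ q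
      = ((q.factorial : ℝ) / ((q + n).factorial : ℝ)) *
          ∑ j ∈ Finset.range (n + 1),
            (-1 : ℝ) ^ (n - j) * (n.choose j : ℝ) * (j : ℝ) ^ (q + n) := by
  have h := integral_unitCube_add_sum_pow_div_factorial n q 0
  simp only [zero_add, integral_div, fwdDiff_iter_eq_sum_shift] at h
  rw [div_eq_iff (by positivity)] at h
  rw [h, Finset.sum_mul, Finset.mul_sum]
  refine Finset.sum_congr rfl fun j _ => ?_
  simp only [zsmul_eq_mul, nsmul_eq_mul, mul_one]
  push_cast
  field_simp

/-- Integral of `(y₁ + ⋯ + yₙ)^q` over the unit hypercube. -/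
theorem stmt_9 (n : ℕ) (hn : 1 ≤ n) (q : ℕ) (hq : 1 < q) :
    ∫ y in Set.Icc (0 : Fin n → ℝ) 1, (∑ i, y i) ^ q
      = ((q.factorial : ℝ) / ((q + n).factorial : ℝ)) *
          ∑ j ∈ Finset.range (n + 1),
            (-1 : ℝ) ^ (n - j) * (n.choose j : ℝ) * (j : ℝ) ^ (q + n) :=
  stmt_9_general n q
end

section
/- Let d ≥ 1, let c ∈ ℝ^d with c > 0 componentwise, let v₀ ∈ ℝ^d with v₀ > 0 componentwise, and set f(x) := e^{cᵀx} − 1, Q_u := v₀ + u·[0,1]^d, F(u) := e^{cᵀv₀ + u·cᵀ𝟙} − 1, and I(u) := ∫_0^1 z^d · (∫_{Q_u} f(z·x) dx) dz. For each u > 0 let ν_u : Q_u → ℝ be the concave envelope of f on Q_u, i.e., ν_u is concave on Q_u, ν_u(x) ≥ f(x) for all x ∈ Q_u, and ν_u(x) ≤ g(x) on Q_u for every concave g : Q_u → ℝ with g ≥ f on Q_u. Then the ratio ( (u^d·F(u))/(d+2) − I(u) ) / ( (1/(d+2))·∫_{Q_u} ν_u(x) dx − I(u) ) tends to d+1 as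 u → ∞. -/
open MeasureTheory Filter Set Topology

/-!
Put `K(u) = cᵀ(v₀ + u𝟙)`, the maximum of `cᵀx` on `Q_u`, and normalise by `u^d e^{K(u)}`.
Since `f(z x) ≤ e^{z K(u)}` on `Q_u`, `I(u) ≤ u^d e^{K(u)} / K(u)` is negligible.

Every `x ∈ Q_u` is the convex combination `s x̄ + (1 - s) y` of the top corner `x̄ = v₀ + u𝟙` and
a point `y` of a lower facet `{yⱼ = v₀ⱼ}`, with `s = m(x)/u` and `m(x) = minᵢ (xᵢ - v₀ᵢ)`.
Concavity of `ν_u` and `ν_u ≥ f ≥ 0` give `ν_u ≥ F(u) m/u`. Convexity of `f` and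
`f ≤ e^{K(u) - u minᵢ cᵢ}` on the lower facets show that `F(u) m/u + e^{K(u) - u minᵢ cᵢ}` is a
concave majorant of `f`, hence of `ν_u`. As `∫_{Q_u} m = u^{d+1}/(d+1)`, this pins down
`∫ ν_u = u^d F(u)/(d+1) + o(u^d e^{K(u)})`, and the ratio tends to
`(1/(d+2)) / (1/((d+2)(d+1))) = d + 1`.
-/

section Box

variable {ι : Type*}

lemma image_add_smul_Icc_zero_one (a : ι → ℝ) {u : ℝ} (hu : 0 < u) :
    (fun y => a + u • y) '' Icc 0 1 = Icc a (a + u • 1) := by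
  have : (fun y : ι → ℝ => a + u • y) = (a + ·) ∘ OrderIso.smulRight hu := rfl
  rw [this, image_comp, OrderIso.image_Icc, image_const_add_Icc]
  simp

lemma volume_real_Icc_add_smul_one [Fintype ι] (a : ι → ℝ) {u : ℝ} (hu : 0 ≤ u) :
    volume.real (Icc a (a + u • 1)) = u ^ Fintype.card ι := by
  rw [measureReal_def, Real.volume_Icc_pi_toReal (by simpa using smul_nonneg hu zero_le_one)]
  simp

end Box

section MinGap

variable {ι : Type*} [Fintype ι] [Nonempty ι]

noncomputable def minGap (a x : ι → ℝ) : ℝ :=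
  Finset.univ.inf' Finset.univ_nonempty fun i => x i - a i

variable {a x : ι → ℝ} {u : ℝ}

lemma minGap_le (a x : ι → ℝ) (i : ι) : minGap a x ≤ x i - a i :=
  Finset.inf'_le _ (Finset.mem_univ i)

lemma le_minGap_iff {t : ℝ} : t ≤ minGap a x ↔ ∀ i, t ≤ x i - a i := by
  simp [minGap]

lemma lt_minGap_iff {t : ℝ} : t < minGap a x ↔ ∀ i, t < x i - a i := by
  simp [minGap]

lemma exists_minGap_eq (a x : ι → ℝ) : ∃ j, minGap a x = x j - a j := by
  obtain ⟨j, -, hj⟩ := Finset.exists_mem_eq_inf' Finset.univ_nonempty fun i => x i - a i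
  exact ⟨j, hj⟩

lemma continuous_minGap (a : ι → ℝ) : Continuous (minGap a) :=
  Continuous.finset_inf'_apply _ fun i _ => (continuous_apply i).sub continuous_const

lemma concaveOn_minGap (a : ι → ℝ) {s : Set (ι → ℝ)} (hs : Convex ℝ s) :
    ConcaveOn ℝ s (minGap a) := by
  refine ⟨hs, fun x _ y _ p q hp hq hpq => le_minGap_iff.2 fun i => ?_⟩
  have key : (p • x + q • y) i - a i = p * (x i - a i) + q * (y i - a i) := by
    simp only [Pi.add_apply, Pi.smul_apply, smul_eq_mul]
    linear_combination a i * hpq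
  rw [key, smul_eq_mul, smul_eq_mul]
  gcongr <;> exact minGap_le a _ i

lemma minGap_nonneg (h : a ≤ x) : 0 ≤ minGap a x :=
  le_minGap_iff.2 fun i => sub_nonneg.2 (h i)

lemma minGap_le_of_le (h : x ≤ a + u • 1) : minGap a x ≤ u := by
  obtain ⟨j, hj⟩ := exists_minGap_eq a x
  have := h j
  simp only [Pi.add_apply, Pi.smul_apply, Pi.one_apply, smul_eq_mul, mul_one] at this
  linarith

lemma setOf_lt_minGap_inter_Icc {t : ℝ} (ht : 0 < t) :
    {x | t < minGap a x} ∩ Icc a (a + u • 1) = pi univ fun i => Ioc (a i + t) (a i + u) := by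
  ext x
  simp only [mem_inter_iff, mem_ofPred_eq, lt_minGap_iff, mem_Icc, mem_univ_pi, mem_Ioc,
    Pi.le_def, Pi.add_apply, Pi.smul_apply, Pi.one_apply, smul_eq_mul, mul_one]
  constructor
  · rintro ⟨h, -, hx⟩ i
    exact ⟨by linarith [h i], hx i⟩
  · intro h
    exact ⟨fun i => by linarith [(h i).1], fun i => by linarith [(h i).1], fun i => (h i).2⟩

lemma integral_minGap (a : ι → ℝ) (hu : 0 ≤ u) :
    ∫ x in Icc a (a + u • 1), minGap a x = u ^ (Fintype.card ι + 1) / (Fintype.card ι + 1) := by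
  set n := Fintype.card ι
  have hn : n ≠ 0 := Fintype.card_ne_zero
  have hint : IntegrableOn (minGap a) (Icc a (a + u • 1)) :=
    (continuous_minGap a).continuousOn.integrableOn_compact isCompact_Icc
  have hnn : 0 ≤ᵐ[volume.restrict (Icc a (a + u • 1))] minGap a :=
    ae_restrict_of_forall_mem measurableSet_Icc fun x hx => minGap_nonneg hx.1
  have hlevel : ∀ t ∈ Ioi (0 : ℝ),
      (volume.restrict (Icc a (a + u • 1))).real {x | t < minGap a x} = (max (u - t) 0) ^ n := by
    intro t ht
    rw [measureReal_restrict_apply (isOpen_lt continuous_const (continuous_minGap a)).measurableSet,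
      setOf_lt_minGap_inter_Icc ht, measureReal_def, volume_pi_pi]
    simp [Real.volume_Ioc, Finset.prod_const, ENNReal.toReal_pow, ENNReal.toReal_ofReal', n]
  rw [hint.integral_eq_integral_meas_lt hnn, setIntegral_congr_fun measurableSet_Ioi hlevel]
  have hvanish : ∀ t ∈ Ioi 0 \ Ioc 0 u, (max (u - t) 0) ^ n = 0 := fun t ht => by
    have : u < t := not_le.1 fun h => ht.2 ⟨ht.1, h⟩
    rw [max_eq_right (by linarith), zero_pow hn]
  rw [setIntegral_eq_of_subset_of_forall_sdiff_eq_zero measurableSet_Ioi Ioc_subset_Ioi_self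
      hvanish, ← intervalIntegral.integral_of_le hu]
  have hpos : ∀ t ∈ uIcc 0 u, (max (u - t) 0) ^ n = (u - t) ^ n := fun t ht => by
    rw [max_eq_left (by linarith [(uIcc_of_le hu ▸ ht).2])]
  rw [intervalIntegral.integral_congr hpos, intervalIntegral.integral_comp_sub_left (· ^ n) u]
  simp [integral_pow]

lemma exists_lowerFace_eq_smul_add_smul (hu : 0 < u) (hx : x ∈ Icc a (a + u • 1)) :
    ∃ y ∈ Icc a (a + u • 1), (∃ j, y j = a j) ∧
      x = (minGap a x / u) • (a + u • 1) + (1 - minGap a x / u) • y := by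
  have hxa : ∀ i, minGap a x ≤ x i - a i := minGap_le a x
  have hxb : ∀ i, x i ≤ a i + u := by simpa [Pi.le_def] using hx.2
  obtain ⟨j, hj⟩ := exists_minGap_eq a x
  have hmu := minGap_le_of_le hx.2
  generalize minGap a x = m at hxa hj hmu ⊢
  rcases hmu.eq_or_lt with rfl | hmu
  · refine ⟨a, ⟨le_rfl, by simpa using smul_nonneg hu.le zero_le_one⟩,
      ⟨Classical.arbitrary ι, rfl⟩, ?_⟩
    ext i
    simp only [div_self hu.ne', sub_self, one_smul, zero_smul, Pi.add_apply, Pi.zero_apply,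
      Pi.smul_apply, Pi.one_apply, smul_eq_mul, mul_one, add_zero]
    linarith [hxa i, hxb i]
  have hum : 0 < u - m := sub_pos.2 hmu
  refine ⟨fun i => a i + u * (x i - a i - m) / (u - m), ⟨fun i => ?_, fun i => ?_⟩,
    ⟨j, by simp [← hj]⟩, ?_⟩
  · simp only [le_add_iff_nonneg_right]
    exact div_nonneg (mul_nonneg hu.le (by linarith [hxa i])) hum.le
  · simp only [Pi.add_apply, Pi.smul_apply, Pi.one_apply, smul_eq_mul, mul_one, add_le_add_iff_left]
    rw [div_le_iff₀ hum]
    nlinarith [hxb i]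
  · ext i
    simp only [Pi.add_apply, Pi.smul_apply, Pi.one_apply, smul_eq_mul, mul_one]
    field_simp
    ring

lemma ConcaveOn.div_mul_minGap_le {φ : (ι → ℝ) → ℝ} (hφ : ConcaveOn ℝ (Icc a (a + u • 1)) φ)
    (hφ0 : ∀ y ∈ Icc a (a + u • 1), 0 ≤ φ y) (hu : 0 < u) (hx : x ∈ Icc a (a + u • 1)) :
    φ (a + u • 1) / u * minGap a x ≤ φ x := by
  obtain ⟨y, hy, -, hxy⟩ := exists_lowerFace_eq_smul_add_smul hu hx
  have hs0 : 0 ≤ minGap a x / u := div_nonneg (minGap_nonneg hx.1) hu.le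
  have hs1 : minGap a x / u ≤ 1 := (div_le_one hu).2 (minGap_le_of_le hx.2)
  have htop : a + u • 1 ∈ Icc a (a + u • 1) := right_mem_Icc.2 (hx.1.trans hx.2)
  have := hφ.2 htop hy hs0 (sub_nonneg.2 hs1) (by ring)
  rw [← hxy, smul_eq_mul, smul_eq_mul] at this
  rw [div_mul_comm]
  nlinarith [mul_nonneg (sub_nonneg.2 hs1) (hφ0 y hy)]

lemma ConvexOn.le_div_mul_minGap_add {ψ : (ι → ℝ) → ℝ} (hψ : ConvexOn ℝ (Icc a (a + u • 1)) ψ)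
    {M : ℝ} (hM : ∀ y ∈ Icc a (a + u • 1), (∃ j, y j = a j) → ψ y ≤ M) (hM0 : 0 ≤ M)
    (hu : 0 < u) (hx : x ∈ Icc a (a + u • 1)) :
    ψ x ≤ ψ (a + u • 1) / u * minGap a x + M := by
  obtain ⟨y, hy, hj, hxy⟩ := exists_lowerFace_eq_smul_add_smul hu hx
  have hs0 : 0 ≤ minGap a x / u := div_nonneg (minGap_nonneg hx.1) hu.le
  have hs1 : minGap a x / u ≤ 1 := (div_le_one hu).2 (minGap_le_of_le hx.2)
  have htop : a + u • 1 ∈ Icc a (a + u • 1) := right_mem_Icc.2 (hx.1.trans hx.2)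
  have := hψ.2 htop hy hs0 (sub_nonneg.2 hs1) (by ring)
  rw [← hxy, smul_eq_mul, smul_eq_mul] at this
  rw [div_mul_comm]
  nlinarith [mul_le_mul_of_nonneg_left (hM y hy hj) (sub_nonneg.2 hs1)]

end MinGap

lemma ConcaveOn.integrableOn_Icc {ι : Type*} [Fintype ι] {a b : ι → ℝ} {φ g : (ι → ℝ) → ℝ}
    (hφ : ConcaveOn ℝ (Icc a b) φ) (hg : IntegrableOn g (Icc a b))
    (hφg : ∀ x ∈ Icc a b, ‖φ x‖ ≤ g x) : IntegrableOn φ (Icc a b) := by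
  set T : Set (ι → ℝ) := pi univ fun i => Ioo (a i) (b i)
  have hT : IsOpen T := isOpen_set_pi finite_univ fun i _ => isOpen_Ioo
  have hTIcc : T ⊆ Icc a b := pi_univ_Icc a b ▸ pi_mono fun i _ => Ioo_subset_Icc_self
  have hae : T =ᵐ[volume] Icc a b := by
    simpa only [← volume_pi] using Measure.univ_pi_Ioo_ae_eq_Icc
      (μ := fun _ : ι => (volume : Measure ℝ)) (f := a) (g := b)
  rw [IntegrableOn, ← Measure.restrict_congr_set hae]
  refine Integrable.mono' (hg.mono_set hTIcc)
    ((hφ.continuousOn_interior.mono (interior_maximal hTIcc hT)).aestronglyMeasurable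
      hT.measurableSet) ?_
  exact ae_restrict_of_forall_mem hT.measurableSet fun x hx => hφg x (hTIcc hx)

structure IsConcaveEnvelopeOn {E : Type*} [AddCommGroup E] [Module ℝ E] (s : Set E)
    (f ν : E → ℝ) : Prop where
  concaveOn : ConcaveOn ℝ s ν
  le : ∀ x ∈ s, f x ≤ ν x
  le_of_concaveOn : ∀ g : E → ℝ, ConcaveOn ℝ s g → (∀ x ∈ s, f x ≤ g x) → ∀ x ∈ s, ν x ≤ g x

theorem IsConcaveEnvelopeOn.integral_mem_Icc {ι : Type*} [Fintype ι] [Nonempty ι]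
    {a : ι → ℝ} {u M : ℝ} {f ν : (ι → ℝ) → ℝ} (hν : IsConcaveEnvelopeOn (Icc a (a + u • 1)) f ν)
    (hu : 0 < u) (hf : ConvexOn ℝ (Icc a (a + u • 1)) f) (hf0 : ∀ x ∈ Icc a (a + u • 1), 0 ≤ f x)
    (hM : ∀ y ∈ Icc a (a + u • 1), (∃ j, y j = a j) → f y ≤ M) :
    ∫ x in Icc a (a + u • 1), ν x ∈ Icc (u ^ Fintype.card ι * f (a + u • 1) / (Fintype.card ι + 1))
      (u ^ Fintype.card ι * f (a + u • 1) / (Fintype.card ι + 1) + u ^ Fintype.card ι * M) := by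
  set B := Icc a (a + u • 1)
  have ha : a ∈ B := left_mem_Icc.2 (by simpa using smul_nonneg hu.le zero_le_one)
  have hM0 : 0 ≤ M := (hf0 a ha).trans (hM a ha ⟨Classical.arbitrary ι, rfl⟩)
  have hftop : 0 ≤ f (a + u • 1) / u := div_nonneg (hf0 _ (right_mem_Icc.2 ha.2)) hu.le
  set g := fun x => f (a + u • 1) / u * minGap a x + M
  have hg : ConcaveOn ℝ B g := ((concaveOn_minGap a (convex_Icc _ _)).smul hftop).add_const M
  have hνg : ∀ x ∈ B, ν x ≤ g x :=
    hν.le_of_concaveOn g hg fun x hx => hf.le_div_mul_minGap_add hM hM0 hu hx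
  have hν0 : ∀ x ∈ B, 0 ≤ ν x := fun x hx => (hf0 x hx).trans (hν.le x hx)
  have hlow : ∀ x ∈ B, f (a + u • 1) / u * minGap a x ≤ ν x := fun x hx =>
    (mul_le_mul_of_nonneg_right (by gcongr; exact hν.le _ (right_mem_Icc.2 ha.2))
      (minGap_nonneg hx.1)).trans (hν.concaveOn.div_mul_minGap_le hν0 hu hx)
  have hm_int : IntegrableOn (minGap a) B :=
    (continuous_minGap a).continuousOn.integrableOn_compact isCompact_Icc
  have hM_int : IntegrableOn (fun _ => M) B := integrableOn_const isCompact_Icc.measure_lt_top.ne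
  have hg_int : IntegrableOn g B := (hm_int.const_mul _).add hM_int
  have hν_int : IntegrableOn ν B := hν.concaveOn.integrableOn_Icc hg_int fun x hx => by
    rw [Real.norm_of_nonneg (hν0 x hx)]; exact hνg x hx
  have hint : ∫ x in B, f (a + u • 1) / u * minGap a x =
      u ^ Fintype.card ι * f (a + u • 1) / (Fintype.card ι + 1) := by
    rw [integral_const_mul, integral_minGap a hu.le]
    field_simp
    ring
  constructor
  · rw [← hint]
    exact setIntegral_mono_on (hm_int.const_mul _) hν_int measurableSet_Icc hlow
  · refine (setIntegral_mono_on hν_int hg_int measurableSet_Icc hνg).trans_eq ?_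
    rw [integral_add (hm_int.const_mul _) hM_int, hint,
      setIntegral_const, volume_real_Icc_add_smul_one a hu.le, smul_eq_mul]

section ExpDotProduct

variable {ι : Type*} [Fintype ι] (c : ι → ℝ)

lemma convexOn_exp_dotProduct_sub_one :
    ConvexOn ℝ univ fun x : ι → ℝ => Real.exp (c ⬝ᵥ x) - 1 := by
  refine ⟨convex_univ, fun x _ y _ p q hp hq hpq => ?_⟩
  have := convexOn_exp.2 (mem_univ (c ⬝ᵥ x)) (mem_univ (c ⬝ᵥ y)) hp hq hpq
  simp only [dotProduct_add, dotProduct_smul, smul_eq_mul] at this ⊢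
  linear_combination this + hpq

lemma dotProduct_add_smul_one (a : ι → ℝ) (u : ℝ) :
    c ⬝ᵥ (a + u • 1) = ∑ i, c i * a i + u * ∑ i, c i := by
  simp only [dotProduct_add, dotProduct_smul, dotProduct_one, smul_eq_mul]
  rfl

lemma tendsto_dotProduct_add_smul_one_atTop [Nonempty ι] (hc : ∀ i, 0 < c i) (a : ι → ℝ) :
    Tendsto (fun u : ℝ => c ⬝ᵥ (a + u • 1)) atTop atTop := by
  simp only [dotProduct_add_smul_one]
  exact tendsto_atTop_add_const_left _ _
    (tendsto_id.atTop_mul_const (Finset.sum_pos (fun i _ => hc i) Finset.univ_nonempty))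

lemma dotProduct_le_sub_of_eq {a y : ι → ℝ} {u : ℝ} (hc : ∀ i, 0 ≤ c i) (hy : y ≤ a + u • 1)
    {j : ι} (hj : y j = a j) : c ⬝ᵥ y ≤ c ⬝ᵥ (a + u • 1) - c j * u := by
  have hsum : c j * (a + u • 1 - y) j ≤ c ⬝ᵥ (a + u • 1 - y) :=
    Finset.single_le_sum (f := fun i => c i * (a + u • 1 - y) i)
      (fun i _ => mul_nonneg (hc i) (sub_nonneg.2 (hy i))) (Finset.mem_univ j)
  simp only [dotProduct_sub, Pi.sub_apply, Pi.add_apply, hj, Pi.smul_apply, Pi.one_apply,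
    smul_eq_mul, mul_one, add_sub_cancel_left] at hsum
  linarith

lemma exp_dotProduct_sub_one_le {a y : ι → ℝ} {u κ : ℝ} (hc : ∀ i, 0 ≤ c i) (hκ : ∀ i, κ ≤ c i)
    (hu : 0 ≤ u) (hy : y ≤ a + u • 1) {j : ι} (hj : y j = a j) :
    Real.exp (c ⬝ᵥ y) - 1 ≤ Real.exp (c ⬝ᵥ (a + u • 1)) * Real.exp (-(κ * u)) := by
  rw [← Real.exp_add]
  have := dotProduct_le_sub_of_eq c hc hy hj
  have := mul_le_mul_of_nonneg_right (hκ j) hu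
  linarith [Real.exp_le_exp.2 (show c ⬝ᵥ y ≤ c ⬝ᵥ (a + u • 1) + -(κ * u) by linarith)]

theorem IsConcaveEnvelopeOn.integral_exp_dotProduct_mem_Icc [Nonempty ι] {a : ι → ℝ} {u κ : ℝ}
    {ν : (ι → ℝ) → ℝ}
    (hν : IsConcaveEnvelopeOn (Icc a (a + u • 1)) (fun x => Real.exp (c ⬝ᵥ x) - 1) ν)
    (hu : 0 < u) (hc : ∀ i, 0 ≤ c i) (hκ : ∀ i, κ ≤ c i) (ha : 0 ≤ c ⬝ᵥ a) :
    ∫ x in Icc a (a + u • 1), ν x ∈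
      Icc (u ^ Fintype.card ι * (Real.exp (c ⬝ᵥ (a + u • 1)) - 1) / (Fintype.card ι + 1))
        (u ^ Fintype.card ι * (Real.exp (c ⬝ᵥ (a + u • 1)) - 1) / (Fintype.card ι + 1) +
          u ^ Fintype.card ι * (Real.exp (c ⬝ᵥ (a + u • 1)) * Real.exp (-(κ * u)))) :=
  hν.integral_mem_Icc hu
    ((convexOn_exp_dotProduct_sub_one c).subset (subset_univ _) (convex_Icc _ _))
    (fun _ hx => sub_nonneg.2 <| Real.one_le_exp <|
      ha.trans (dotProduct_le_dotProduct_of_nonneg_left hx.1 hc))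
    fun _ hy ⟨_, hj⟩ => exp_dotProduct_sub_one_le c hc hκ hu.le hy.2 hj

lemma intervalIntegral_pow_mul_setIntegral_exp_mem_Icc {s : Set (ι → ℝ)} (hs : MeasurableSet s)
    (hsV : volume s ≠ ⊤) {K : ℝ} (hK : 0 < K) (hc0 : ∀ x ∈ s, 0 ≤ c ⬝ᵥ x)
    (hcK : ∀ x ∈ s, c ⬝ᵥ x ≤ K) (n : ℕ) :
    ∫ z in (0 : ℝ)..1, z ^ n * ∫ x in s, (Real.exp (c ⬝ᵥ (z • x)) - 1) ∈
      Icc 0 (volume.real s * Real.exp K / K) := by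
  have hinner0 : ∀ z ∈ Ioc (0 : ℝ) 1, ∀ x ∈ s, 0 ≤ Real.exp (c ⬝ᵥ (z • x)) - 1 := by
    intro z hz x hx
    rw [dotProduct_smul, smul_eq_mul, sub_nonneg]
    exact Real.one_le_exp (mul_nonneg hz.1.le (hc0 x hx))
  have hinnerK : ∀ z ∈ Ioc (0 : ℝ) 1,
      ∫ x in s, (Real.exp (c ⬝ᵥ (z • x)) - 1) ≤ volume.real s * Real.exp (z * K) := by
    intro z hz
    rw [← smul_eq_mul, ← setIntegral_const]
    refine integral_mono_of_nonneg (ae_restrict_of_forall_mem hs (hinner0 z hz))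
      (integrableOn_const hsV) (ae_restrict_of_forall_mem hs fun x hx => ?_)
    simp only [dotProduct_smul, smul_eq_mul]
    linarith [Real.exp_le_exp.2 (mul_le_mul_of_nonneg_left (hcK x hx) hz.1.le)]
  have hexp : ∫ z in (0 : ℝ)..1, volume.real s * Real.exp (z * K) =
      volume.real s * ((Real.exp K - 1) / K) := by
    rw [intervalIntegral.integral_const_mul,
      intervalIntegral.integral_comp_mul_right Real.exp hK.ne', integral_exp]
    simp [div_eq_inv_mul]
  rw [intervalIntegral.integral_of_le zero_le_one]
  constructor
  · exact setIntegral_nonneg measurableSet_Ioc fun z hz =>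
      mul_nonneg (pow_nonneg hz.1.le n) (setIntegral_nonneg hs (hinner0 z hz))
  · refine (integral_mono_of_nonneg (ae_restrict_of_forall_mem measurableSet_Ioc fun z hz =>
      mul_nonneg (pow_nonneg hz.1.le n) (setIntegral_nonneg hs (hinner0 z hz)))
      (((by fun_prop : Continuous fun z => volume.real s * Real.exp (z * K)).integrableOn_Icc)
        |>.mono_set Ioc_subset_Icc_self)
      (ae_restrict_of_forall_mem measurableSet_Ioc fun z hz => ?_)).trans ?_
    · exact (mul_le_of_le_one_left (setIntegral_nonneg hs (hinner0 z hz))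
        (pow_le_one₀ hz.1.le hz.2)).trans (hinnerK z hz)
    · rw [← intervalIntegral.integral_of_le zero_le_one, hexp, mul_div_assoc]
      gcongr
      linarith

end ExpDotProduct

lemma tendsto_exp_sub_one_div_exp {α : Type*} {l : Filter α} {K : α → ℝ}
    (hK : Tendsto K l atTop) :
    Tendsto (fun x => (Real.exp (K x) - 1) / Real.exp (K x)) l (𝓝 1) := by
  have h := (tendsto_const_nhds (x := (1 : ℝ))).sub
    (Real.tendsto_exp_atTop.comp hK).inv_tendsto_atTop
  rw [sub_zero] at h
  refine h.congr fun x => ?_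
  simp only [Function.comp_apply, Pi.inv_apply]
  field_simp

lemma tendsto_div_of_tendsto_div_of_tendsto_div {α : Type*} {l : Filter α} {n d φ : α → ℝ}
    {a b : ℝ} (hφ : ∀ᶠ x in l, φ x ≠ 0) (hn : Tendsto (fun x => n x / φ x) l (𝓝 a))
    (hd : Tendsto (fun x => d x / φ x) l (𝓝 b)) (hb : b ≠ 0) :
    Tendsto (fun x => n x / d x) l (𝓝 (a / b)) :=
  (hn.div hd hb).congr' (hφ.mono fun _ hx => div_div_div_cancel_right₀ hx _ _)

lemma tendsto_relaxation_ratio {α : Type*} {l : Filter α} {n : ℕ} {V E F K ε I J : α → ℝ}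
    (hV : ∀ᶠ x in l, 0 < V x) (hE : ∀ᶠ x in l, 0 < E x)
    (hFE : Tendsto (fun x => F x / E x) l (𝓝 1)) (hK : Tendsto K l atTop)
    (hε : Tendsto ε l (𝓝 0))
    (hI : ∀ᶠ x in l, I x ∈ Icc 0 (V x * E x / K x))
    (hJ : ∀ᶠ x in l, J x ∈ Icc (V x * F x / (n + 1)) (V x * F x / (n + 1) + V x * (E x * ε x))) :
    Tendsto (fun x => (V x * F x / (n + 2) - I x) / (1 / (n + 2) * J x - I x)) l
      (𝓝 (n + 1)) := by
  have hVE : ∀ᶠ x in l, 0 < V x * E x := (hV.and hE).mono fun _ h => mul_pos h.1 h.2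
  have hI' : Tendsto (fun x => I x / (V x * E x)) l (𝓝 0) := by
    refine tendsto_of_tendsto_of_tendsto_of_le_of_le' tendsto_const_nhds
      (hK.inv_tendsto_atTop : Tendsto (fun x => (K x)⁻¹) l _) ?_ ?_
    · filter_upwards [hI, hVE] with x hx hx' using div_nonneg hx.1 hx'.le
    · filter_upwards [hI, hVE, hK.eventually_gt_atTop 0] with x hx hx' hKx
      rw [div_le_iff₀ hx']
      exact hx.2.trans_eq (by simp only [Pi.inv_apply]; field_simp)
  have hFE' : Tendsto (fun x => F x / E x / (n + 1)) l (𝓝 (1 / (n + 1))) := hFE.div_const _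
  have hJ' : Tendsto (fun x => J x / (V x * E x)) l (𝓝 (1 / (n + 1))) := by
    refine tendsto_of_tendsto_of_tendsto_of_le_of_le' hFE' (by simpa using hFE'.add hε) ?_ ?_
    · filter_upwards [hJ, hV, hE] with x hx hVx hEx
      rw [le_div_iff₀ (mul_pos hVx hEx)]
      exact (le_of_eq (by field_simp)).trans hx.1
    · filter_upwards [hJ, hV, hE] with x hx hVx hEx
      rw [div_le_iff₀ (mul_pos hVx hEx)]
      exact hx.2.trans_eq (by field_simp)
  have hnum : Tendsto (fun x => (V x * F x / (n + 2) - I x) / (V x * E x)) l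
      (𝓝 (1 / (n + 2))) := by
    have h := (hFE.div_const (n + 2)).sub hI'
    rw [sub_zero] at h
    refine h.congr' ?_
    filter_upwards [hV, hE] with x hVx hEx
    field_simp
  have hden : Tendsto (fun x => (1 / (n + 2) * J x - I x) / (V x * E x)) l
      (𝓝 (1 / (n + 2) * (1 / (n + 1)))) := by
    have h := (hJ'.const_mul (1 / ((n : ℝ) + 2))).sub hI'
    rw [sub_zero] at h
    refine h.congr' ?_
    filter_upwards [hV, hE] with x hVx hEx
    field_simp
  convert tendsto_div_of_tendsto_div_of_tendsto_div (hVE.mono fun _ h => h.ne') hnum hden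
    (by positivity) using 2
  field_simp

/-- The ratio of the volume of the naïve relaxation with the constant upper
bound `F` to that with the concave-envelope upper bound tends to `d + 1`
as the box `Q_u = v₀ + u·[0,1]^d` is scaled up, for `f(x) = e^{cᵀx} − 1`. -/
theorem stmt_15 (d : ℕ) (hd : 1 ≤ d) (c v₀ : Fin d → ℝ)
    (hc : ∀ i, 0 < c i) (hv : ∀ i, 0 < v₀ i)
    (f : (Fin d → ℝ) → ℝ) (hf : f = fun x => Real.exp (∑ i, c i * x i) - 1)
    (Q : ℝ → Set (Fin d → ℝ))
    (hQ : ∀ u : ℝ, Q u = (fun y : Fin d → ℝ => v₀ + u • y) '' Set.Icc (0 : Fin d → ℝ) 1)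
    (F : ℝ → ℝ)
    (hF : ∀ u : ℝ, F u = Real.exp (∑ i, c i * v₀ i + u * ∑ i, c i) - 1)
    (I : ℝ → ℝ)
    (hI : ∀ u : ℝ, I u = ∫ z in (0:ℝ)..1, z ^ d * ∫ x in Q u, f (z • x))
    (ν : ℝ → (Fin d → ℝ) → ℝ)
    (hν : ∀ u : ℝ, 0 < u →
      ConcaveOn ℝ (Q u) (ν u) ∧ (∀ x ∈ Q u, f x ≤ ν u x) ∧
        ∀ g : (Fin d → ℝ) → ℝ, ConcaveOn ℝ (Q u) g → (∀ x ∈ Q u, f x ≤ g x) →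
          ∀ x ∈ Q u, ν u x ≤ g x) :
    Tendsto (fun u : ℝ =>
        ((u ^ d * F u) / ((d : ℝ) + 2) - I u) /
          ((1 / ((d : ℝ) + 2)) * (∫ x in Q u, ν u x) - I u))
      atTop (nhds ((d : ℝ) + 1)) := by
  have : Nonempty (Fin d) := ⟨⟨0, hd⟩⟩
  obtain ⟨i₀, hi₀⟩ := Finite.exists_min c
  have hc' : ∀ i, 0 ≤ c i := fun i => (hc i).le
  have hcv : 0 ≤ c ⬝ᵥ v₀ := dotProduct_nonneg_of_nonneg hc' fun i => (hv i).le
  have hK := tendsto_dotProduct_add_smul_one_atTop c hc v₀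
  have hbox : ∀ u, 0 < u → Q u = Icc v₀ (v₀ + u • 1) := fun u hu =>
    (hQ u).trans (image_add_smul_Icc_zero_one v₀ hu)
  subst hf
  refine tendsto_relaxation_ratio (E := fun u => Real.exp (c ⬝ᵥ (v₀ + u • 1)))
    (ε := fun u => Real.exp (-(c i₀ * u))) ((eventually_gt_atTop 0).mono fun u hu => pow_pos hu d)
    (.of_forall fun u => Real.exp_pos _) ((tendsto_exp_sub_one_div_exp hK).congr
      fun u => by rw [hF, dotProduct_add_smul_one]) hK
    (Real.tendsto_exp_neg_atTop_nhds_zero.comp (tendsto_id.const_mul_atTop (hc i₀))) ?_ ?_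
  · filter_upwards [eventually_gt_atTop 0, hK.eventually_gt_atTop 0] with u hu hKu
    have h := intervalIntegral_pow_mul_setIntegral_exp_mem_Icc c measurableSet_Icc
      isCompact_Icc.measure_lt_top.ne hKu
      (fun x hx => hcv.trans (dotProduct_le_dotProduct_of_nonneg_left hx.1 hc'))
      (fun x hx => dotProduct_le_dotProduct_of_nonneg_left hx.2 hc') d
    rw [volume_real_Icc_add_smul_one v₀ hu.le, Fintype.card_fin, ← hbox u hu] at h
    rwa [hI]
  · filter_upwards [eventually_gt_atTop 0] with u hu
    obtain ⟨hconc, hle, hmin⟩ := hν u hu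
    rw [hbox u hu] at hconc hle hmin ⊢
    rw [hF, ← dotProduct_add_smul_one]
    simpa only [Fintype.card_fin] using
      IsConcaveEnvelopeOn.integral_exp_dotProduct_mem_Icc c ⟨hconc, hle, hmin⟩ hu hc' hi₀ hcv
end

section
/- Let d ≥ 1, let f : ℝ^d → ℝ be a nonnegative continuous convex function with f(0) = 0, let v₀ ∈ ℝ^d with v₀ > 0 componentwise, and for each u > 0 set Q_u := v₀ + u·[0,1]^d and let μ_u : Q_u → ℝ be a continuous concave function with μ_u(x) ≥ f(x) for all x ∈ Q_u. Set I(u) := ∫_0^1 z^d · (∫_{Q_u} f(z·x) dx) dz, Δ(u) := (1/(d+2))·∫_{Q_u} f(x) dx − I(u), and V(u) := (1/(d+2))·∫_{Q_u} μ_u(x) dx − I(u), and assume ∫_{[0,1]^d} μ_u(v₀ + u·x) dx > 0 for all sufficiently large u. If ( ∫_{[0,1]^d} f(v₀ + u·x) dx ) / ( ∫_{[0,1]^d} μ_u(v₀ + u·x) dx ) tends to 0 as u → ∞, then Δ(u)/V(u) tends to 0 as u → ∞. -/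
/-!
Convexity and `f 0 = 0` give `f (z • x) ≤ z * f x` for `z ∈ [0, 1]`, so with `A = ∫_{Q_u} f`
the term `I(u)` lies between `0` and `∫₀¹ z ^ (d + 1) dz · A = A / (d + 2)`. Hence
`0 ≤ Δ(u) ≤ A / (d + 2)` and `V(u) ≥ (B - A) / (d + 2)` with `B = ∫_{Q_u} μ_u`, so
`Δ / V ≤ r / (1 - r)` for `r = A / B`. The affine change of variables `x ↦ v₀ + u • x`
multiplies both `A` and `B` by `u ^ d`, so `r` is exactly the ratio assumed to tend to `0`.
-/

open MeasureTheory Filter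

theorem setIntegral_image_const_add_smul {E F : Type*} [NormedAddCommGroup E]
    [NormedSpace ℝ E] [FiniteDimensional ℝ E] [MeasurableSpace E] [BorelSpace E]
    [NormedAddCommGroup F] [NormedSpace ℝ F] (μ : Measure E) [μ.IsAddHaarMeasure] {s : Set E}
    (hs : MeasurableSet s) (v₀ : E) {u : ℝ} (hu : u ≠ 0) (g : E → F) :
    ∫ x in (fun y => v₀ + u • y) '' s, g x ∂μ =
      |u| ^ Module.finrank ℝ E • ∫ x in s, g (v₀ + u • x) ∂μ := by
  have hderiv : ∀ x ∈ s, HasFDerivWithinAt (fun y => v₀ + u • y)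
      (u • ContinuousLinearMap.id ℝ E) s x := fun x _ =>
    (((hasFDerivAt_id x).const_smul u).const_add v₀).hasFDerivWithinAt
  have hinj : Set.InjOn (fun y => v₀ + u • y) s := fun a _ b _ h =>
    smul_right_injective E hu (add_left_cancel h)
  rw [integral_image_eq_integral_abs_det_fderiv_smul μ hs hderiv hinj, integral_smul]
  simp [ContinuousLinearMap.det, LinearMap.det_smul, abs_pow]

theorem ConvexOn.map_smul_le_mul_of_map_zero {E : Type*} [AddCommGroup E] [Module ℝ E]
    {s : Set E} {f : E → ℝ} (hf : ConvexOn ℝ s f) (h0s : (0 : E) ∈ s) (hf0 : f 0 = 0)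
    {x : E} (hx : x ∈ s) {z : ℝ} (hz : z ∈ Set.Icc (0 : ℝ) 1) : f (z • x) ≤ z * f x := by
  simpa [hf0] using hf.2 hx h0s hz.1 (sub_nonneg.2 hz.2) (add_sub_cancel z 1)

theorem integral_pow_mul_setIntegral_comp_smul_le {E : Type*} [AddCommGroup E] [Module ℝ E]
    [MeasurableSpace E] (μ : Measure E) {s : Set E} {f : E → ℝ} (hf : ConvexOn ℝ Set.univ f)
    (hf0 : f 0 = 0) (hf_nonneg : ∀ x, 0 ≤ f x) (hfs : IntegrableOn f s μ) (n : ℕ) :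
    ∫ z in (0 : ℝ)..1, z ^ n * ∫ x in s, f (z • x) ∂μ ≤ (∫ x in s, f x ∂μ) / (n + 2) := by
  have hpoint : ∀ z ∈ Set.Ioc (0 : ℝ) 1,
      z ^ n * ∫ x in s, f (z • x) ∂μ ≤ z ^ (n + 1) * ∫ x in s, f x ∂μ := by
    intro z hz
    have hinner : ∫ x in s, f (z • x) ∂μ ≤ ∫ x in s, z * f x ∂μ :=
      setIntegral_mono_of_nonneg (fun x _ => hf_nonneg _)
        (fun x _ => hf.map_smul_le_mul_of_map_zero trivial hf0 trivial
          (Set.Ioc_subset_Icc_self hz))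
        (hfs.const_mul z)
    rw [integral_const_mul] at hinner
    calc z ^ n * ∫ x in s, f (z • x) ∂μ ≤ z ^ n * (z * ∫ x in s, f x ∂μ) :=
          mul_le_mul_of_nonneg_left hinner (pow_nonneg hz.1.le n)
      _ = z ^ (n + 1) * ∫ x in s, f x ∂μ := by ring
  -- `setIntegral_mono_of_nonneg` needs no integrability of the smaller integrand.
  calc ∫ z in (0 : ℝ)..1, z ^ n * ∫ x in s, f (z • x) ∂μ
      ≤ ∫ z in (0 : ℝ)..1, z ^ (n + 1) * ∫ x in s, f x ∂μ := by
        rw [intervalIntegral.integral_of_le zero_le_one,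
          intervalIntegral.integral_of_le zero_le_one]
        refine setIntegral_mono_of_nonneg (fun z hz => ?_) hpoint ?_
        · exact mul_nonneg (pow_nonneg hz.1.le n) (integral_nonneg fun x => hf_nonneg _)
        · exact (by fun_prop : Continuous fun z : ℝ => z ^ (n + 1) * ∫ x in s, f x ∂μ)
            |>.integrableOn_Ioc
    _ = (∫ x in s, f x ∂μ) / (n + 2) := by
        rw [intervalIntegral.integral_mul_const, integral_pow]
        push_cast
        ring

theorem sub_div_sub_mem_Icc {c A B I : ℝ} (hc : 0 < c) (hI : 0 ≤ I) (hIA : I ≤ c * A)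
    (hB : 0 < B) (hAB : A / B < 1) :
    (c * A - I) / (c * B - I) ∈ Set.Icc 0 (A / B / (1 - A / B)) := by
  have hA_lt_B : A < B := (div_lt_one hB).1 hAB
  have hden : c * (B - A) ≤ c * B - I := by linarith
  have hden_pos : 0 < c * (B - A) := mul_pos hc (sub_pos.2 hA_lt_B)
  have hrhs : A / B / (1 - A / B) = c * A / (c * (B - A)) := by
    field_simp
  refine ⟨div_nonneg (by linarith) (by linarith), ?_⟩
  rw [hrhs]
  exact div_le_div₀ (by nlinarith) (by linarith) hden_pos hden

theorem stmt_18_general (d : ℕ)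
    (f : (Fin d → ℝ) → ℝ) (hf0 : f 0 = 0) (hfnn : ∀ x, 0 ≤ f x)
    (hfc : Continuous f) (hfv : ConvexOn ℝ Set.univ f)
    (v₀ : Fin d → ℝ)
    (Q : ℝ → Set (Fin d → ℝ))
    (hQ : ∀ u : ℝ, Q u = (fun y : Fin d → ℝ => v₀ + u • y) '' Set.Icc (0 : Fin d → ℝ) 1)
    (μ : ℝ → (Fin d → ℝ) → ℝ)
    (I Δ V : ℝ → ℝ)
    (hI : ∀ u : ℝ, I u = ∫ z in (0:ℝ)..1, z ^ d * ∫ x in Q u, f (z • x))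
    (hΔ : ∀ u : ℝ, Δ u = (1 / ((d : ℝ) + 2)) * (∫ x in Q u, f x) - I u)
    (hV : ∀ u : ℝ, V u = (1 / ((d : ℝ) + 2)) * (∫ x in Q u, μ u x) - I u)
    (hpos : ∀ᶠ u in atTop, 0 < ∫ x in Set.Icc (0 : Fin d → ℝ) 1, μ u (v₀ + u • x))
    (hratio : Tendsto (fun u : ℝ =>
        (∫ x in Set.Icc (0 : Fin d → ℝ) 1, f (v₀ + u • x)) /
          (∫ x in Set.Icc (0 : Fin d → ℝ) 1, μ u (v₀ + u • x))) atTop (nhds 0)) :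
    Tendsto (fun u : ℝ => Δ u / V u) atTop (nhds 0) := by
  set r := fun u : ℝ => (∫ x in Set.Icc (0 : Fin d → ℝ) 1, f (v₀ + u • x)) /
    (∫ x in Set.Icc (0 : Fin d → ℝ) 1, μ u (v₀ + u • x))
  have hscale : ∀ u, 0 < u → ∀ g : (Fin d → ℝ) → ℝ,
      ∫ x in Q u, g x = u ^ d * ∫ x in Set.Icc (0 : Fin d → ℝ) 1, g (v₀ + u • x) := by
    intro u hu g
    rw [hQ, setIntegral_image_const_add_smul volume measurableSet_Icc v₀ hu.ne',
      Module.finrank_fin_fun, abs_of_pos hu, smul_eq_mul]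
  have hbound : ∀ᶠ u in atTop, Δ u / V u ∈ Set.Icc 0 (r u / (1 - r u)) := by
    filter_upwards [hpos, eventually_gt_atTop 0,
      hratio.eventually (eventually_lt_nhds one_pos)] with u hM hu hr
    have hfQ : IntegrableOn f (Q u) :=
      hfc.continuousOn.integrableOn_compact (hQ u ▸ isCompact_Icc.image (by fun_prop))
    have hr_eq : r u = (∫ x in Q u, f x) / ∫ x in Q u, μ u x := by
      rw [hscale u hu, hscale u hu, mul_div_mul_left _ _ (pow_pos hu d).ne']
    rw [hΔ, hV, hr_eq]
    refine sub_div_sub_mem_Icc (by positivity) ?_ ?_ ?_ (hr_eq ▸ hr)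
    · rw [hI]
      exact intervalIntegral.integral_nonneg zero_le_one fun z hz =>
        mul_nonneg (pow_nonneg hz.1 d) (integral_nonneg fun x => hfnn _)
    · rw [hI, one_div_mul_eq_div]
      exact integral_pow_mul_setIntegral_comp_smul_le volume hfv hf0 hfnn hfQ d
    · rw [hscale u hu]
      exact mul_pos (pow_pos hu d) hM
  have hlim : Tendsto (fun u => r u / (1 - r u)) atTop (nhds 0) := by
    have h := hratio.div (tendsto_const_nhds.sub hratio) (by norm_num : (1 : ℝ) - 0 ≠ 0)
    rwa [sub_zero, zero_div] at h
  exact squeeze_zero' (hbound.mono fun _ h => h.1) (hbound.mono fun _ h => h.2) hlim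

/-- A sufficient condition for a nonnegative convex function `f` with `f(0) = 0`
to have asymptotic cut-off ratio `0` on the scaled box `Q_u = v₀ + u·[0,1]^d`. -/
theorem stmt_18 (d : ℕ) (hd : 1 ≤ d)
    (f : (Fin d → ℝ) → ℝ) (hf0 : f 0 = 0) (hfnn : ∀ x, 0 ≤ f x)
    (hfc : Continuous f) (hfv : ConvexOn ℝ Set.univ f)
    (v₀ : Fin d → ℝ) (hv : ∀ i, 0 < v₀ i)
    (Q : ℝ → Set (Fin d → ℝ))
    (hQ : ∀ u : ℝ, Q u = (fun y : Fin d → ℝ => v₀ + u • y) '' Set.Icc (0 : Fin d → ℝ) 1)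
    (μ : ℝ → (Fin d → ℝ) → ℝ)
    (hμ : ∀ u : ℝ, 0 < u → ContinuousOn (μ u) (Q u) ∧ ConcaveOn ℝ (Q u) (μ u) ∧
      ∀ x ∈ Q u, f x ≤ μ u x)
    (I Δ V : ℝ → ℝ)
    (hI : ∀ u : ℝ, I u = ∫ z in (0:ℝ)..1, z ^ d * ∫ x in Q u, f (z • x))
    (hΔ : ∀ u : ℝ, Δ u = (1 / ((d : ℝ) + 2)) * (∫ x in Q u, f x) - I u)
    (hV : ∀ u : ℝ, V u = (1 / ((d : ℝ) + 2)) * (∫ x in Q u, μ u x) - I u)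
    (hpos : ∀ᶠ u in atTop, 0 < ∫ x in Set.Icc (0 : Fin d → ℝ) 1, μ u (v₀ + u • x))
    (hratio : Tendsto (fun u : ℝ =>
        (∫ x in Set.Icc (0 : Fin d → ℝ) 1, f (v₀ + u • x)) /
          (∫ x in Set.Icc (0 : Fin d → ℝ) 1, μ u (v₀ + u • x))) atTop (nhds 0)) :
    Tendsto (fun u : ℝ => Δ u / V u) atTop (nhds 0) :=
  stmt_18_general d f hf0 hfnn hfc hfv v₀ Q hQ μ I Δ V hI hΔ hV hpos hratio
end

section
/- Let T be a nonempty finite set with ℓ := |T| elements, and let (c_j)_{j∈T} be real numbers such that Σ_{j∈S} c_j ≠ 0 for every nonempty subset S ⊆ T. Then Σ over all orderings (i₁, i₂, …, i_ℓ) of T (i.e., all bijections from {1,…,ℓ} to T) of the product ∏_{k=1}^{ℓ} 1/(c_{i₁} + c_{i₂} + ⋯ + c_{i_k}) equals 1/∏_{j∈T} c_j. -/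
/-!
In every ordering the last partial sum is the full sum `∑ c`. Grouping the orderings by their
last element `j`, what remains is an ordering of `T \ {j}`, so by induction the total is
`(∑ c)⁻¹ * ∑ j, (∏ i ≠ j, c i)⁻¹ = (∑ c)⁻¹ * ∑ j, c j / ∏ c = (∏ c)⁻¹`.
-/

open Finset

section

variable {ι : Type*} [DecidableEq ι] {n : ℕ}

def equivSubtypeLastEq (j : ι) :
    {σ : Fin (n + 1) ≃ ι // σ (Fin.last n) = j} ≃ (Fin n ≃ {i // i ≠ j}) :=
  (Equiv.subtypeEquiv (finSuccEquivLast.equivCongr (Equiv.refl ι)) fun σ => by simp).trans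
    (Equiv.optionSubtype j)

@[simp] theorem coe_equivSubtypeLastEq_apply (j : ι)
    (σ : {σ : Fin (n + 1) ≃ ι // σ (Fin.last n) = j}) (m : Fin n) :
    (equivSubtypeLastEq j σ m : ι) = (σ : Fin (n + 1) ≃ ι) m.castSucc := by
  simp [equivSubtypeLastEq, Equiv.optionSubtype]

end

section

variable {K : Type*} [Field K]

def prodInvPartialSums {n : ℕ} (a : Fin n → K) : K :=
  ∏ k, (∑ m ∈ univ.filter (· ≤ k), a m)⁻¹

theorem prodInvPartialSums_succ {n : ℕ} (a : Fin (n + 1) → K) :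
    prodInvPartialSums a = prodInvPartialSums (fun m => a m.castSucc) * (∑ m, a m)⁻¹ := by
  simp only [prodInvPartialSums, filter_ge_eq_Iic, Fin.prod_univ_castSucc, Fin.sum_Iic_castSucc]
  rw [← Fin.top_eq_last, Iic_top]

theorem sum_equiv_prodInvPartialSums {ι : Type*} [Fintype ι] [DecidableEq ι] (c : ι → K)
    (hc : ∀ S : Finset ι, S.Nonempty → ∑ j ∈ S, c j ≠ 0) {n : ℕ} (hn : Fintype.card ι = n) :
    ∑ σ : Fin n ≃ ι, prodInvPartialSums (fun m => c (σ m)) = (∏ j, c j)⁻¹ := by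
  induction n generalizing ι with
  | zero =>
    have := Fintype.card_eq_zero_iff.mp hn
    simp [prodInvPartialSums, Fintype.card_equiv (Equiv.equivOfIsEmpty (Fin 0) ι)]
  | succ n ih =>
    have hc₀ (j : ι) : c j ≠ 0 := by simpa using hc {j} (singleton_nonempty j)
    have hne : (univ : Finset ι).Nonempty := by
      rw [← card_pos, card_univ, hn]; exact n.succ_pos
    have hfiber (j : ι) :
        ∑ σ : {σ : Fin (n + 1) ≃ ι // σ (Fin.last n) = j},
            prodInvPartialSums (fun m => c ((σ : Fin (n + 1) ≃ ι) m.castSucc))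
          = (∏ i : {i // i ≠ j}, c i)⁻¹ := by
      rw [← ih (fun i : {i // i ≠ j} => c i)
        (fun S hS => by simpa using hc _ (hS.map (f := .subtype _))) (by simp [hn])]
      exact Fintype.sum_equiv (equivSubtypeLastEq j) _ _ fun σ => by simp
    calc ∑ σ : Fin (n + 1) ≃ ι, prodInvPartialSums (fun m => c (σ m))
        = (∑ j, c j)⁻¹ * ∑ j, ∑ σ : {σ : Fin (n + 1) ≃ ι // σ (Fin.last n) = j},
            prodInvPartialSums (fun m => c ((σ : Fin (n + 1) ≃ ι) m.castSucc)) := by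
          simp only [prodInvPartialSums_succ, Equiv.sum_comp]
          rw [Fintype.sum_fiberwise (fun σ : Fin (n + 1) ≃ ι => σ (Fin.last n))
            (fun σ : Fin (n + 1) ≃ ι => prodInvPartialSums (fun m => c (σ m.castSucc))),
            ← sum_mul, mul_comm]
      _ = (∑ j, c j)⁻¹ * ∑ j, c j * (∏ i, c i)⁻¹ := by
          congr 1
          refine sum_congr rfl fun j _ => ?_
          rw [hfiber, Fintype.prod_eq_mul_prod_subtype_ne c j, mul_inv,
            mul_inv_cancel_left₀ (hc₀ j)]
      _ = (∏ j, c j)⁻¹ := by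
          rw [← sum_mul, inv_mul_cancel_left₀ (hc univ hne)]

end

theorem stmt_19_general (ι : Type*) [Fintype ι] [DecidableEq ι]
    (c : ι → ℝ)
    (hgen : ∀ S : Finset ι, S.Nonempty → ∑ j ∈ S, c j ≠ 0) :
    ∑ σ : Fin (Fintype.card ι) ≃ ι,
        ∏ k : Fin (Fintype.card ι),
          (∑ m ∈ Finset.univ.filter (fun m : Fin (Fintype.card ι) => m ≤ k), c (σ m))⁻¹
      = (∏ j, c j)⁻¹ :=
  sum_equiv_prodInvPartialSums c hgen rfl

/-- Sum over all orderings of a nonempty finite index set `ι` of the product of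
reciprocals of the partial sums equals the reciprocal of the product, provided
every nonempty partial sum is nonzero. -/
theorem stmt_19 (ι : Type*) [Fintype ι] [DecidableEq ι] [Nonempty ι]
    (c : ι → ℝ)
    (hgen : ∀ S : Finset ι, S.Nonempty → ∑ j ∈ S, c j ≠ 0) :
    ∑ σ : Fin (Fintype.card ι) ≃ ι,
        ∏ k : Fin (Fintype.card ι),
          (∑ m ∈ Finset.univ.filter (fun m : Fin (Fintype.card ι) => m ≤ k), c (σ m))⁻¹
      = (∏ j, c j)⁻¹ :=
  stmt_19_general ι c hgen
end
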